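/- arXiv:2410.15850 — 6 statements merged into one kernel-verified Lean document; each statement's English description precedes it below -/
import Mathlib

section
/- Let d ≥ 1 and let f : ℝ^d → ℂ be a Schwartz function. Suppose there is ω₀ > 0 such that 𝓕f(ω) = 0 for every ω with ‖ω‖ ≤ ω₀. Then ∫_{ℝ^d} ‖f(x)‖² dx ≤ (4π²ω₀²)⁻¹ · Σ_{j=1}^{d} ∫_{ℝ^d} |∂_j f(x)|² dx, i.e. the L² norm of f is bounded by (2πω₀)⁻¹ times the L² norm of its gradient (a Poincaré-type inequality on ℝ^d for functions whose Fourier transform vanishes on the ball of radius ω₀). -/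
/-!
By Plancherel and `𝓕 (∂_m f) ξ = 2πi ⟪ξ, m⟫ 𝓕 f ξ`, summing over an orthonormal basis turns
`∑ᵢ ‖∂_{bᵢ} f‖₂²` into `4π² ∫ ‖ξ‖² ‖𝓕 f ξ‖² dξ`. Since `𝓕 f` vanishes on the ball of radius `r`,
the weight `‖ξ‖²` may be replaced by `r²` from below, and Plancherel once more gives `‖f‖₂²`.
-/

open MeasureTheory Real LineDeriv
open scoped FourierTransform RealInnerProductSpace

namespace SchwartzMap

variable {V : Type*} [NormedAddCommGroup V] [InnerProductSpace ℝ V] [FiniteDimensional ℝ V]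
  [MeasurableSpace V] [BorelSpace V]

theorem integrable_norm_sq {F : Type*} [NormedAddCommGroup F] [NormedSpace ℝ F] (f : 𝓢(V, F)) :
    Integrable (fun x ↦ ‖f x‖ ^ 2) :=
  (f.memLp 2).integrable_norm_pow two_ne_zero

theorem norm_fourier_lineDerivOp_apply {E : Type*} [NormedAddCommGroup E] [NormedSpace ℂ E]
    (f : 𝓢(V, E)) (m ξ : V) :
    ‖𝓕 (∂_{m} f) ξ‖ = 2 * π * |⟪ξ, m⟫| * ‖𝓕 f ξ‖ := by
  have : (inner ℝ · m).HasTemperateGrowth := by fun_prop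
  simp [fourier_lineDerivOp_eq, smulLeftCLM_apply_apply this, norm_smul, abs_of_pos pi_pos,
    mul_assoc]

theorem sum_norm_sq_fourier_lineDerivOp_apply {ι E : Type*} [Fintype ι] [NormedAddCommGroup E]
    [NormedSpace ℂ E] (b : OrthonormalBasis ι ℝ V) (f : 𝓢(V, E)) (ξ : V) :
    ∑ i, ‖𝓕 (∂_{b i} f) ξ‖ ^ 2 = 4 * π ^ 2 * ‖ξ‖ ^ 2 * ‖𝓕 f ξ‖ ^ 2 := by
  simp only [norm_fourier_lineDerivOp_apply, mul_pow, sq_abs, ← Finset.sum_mul, ← Finset.mul_sum,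
    b.sum_sq_inner_left]
  ring

variable {H : Type*} [NormedAddCommGroup H] [InnerProductSpace ℂ H] [CompleteSpace H]
  {ι : Type*} [Fintype ι]

theorem sum_integral_norm_sq_lineDerivOp (b : OrthonormalBasis ι ℝ V) (f : 𝓢(V, H)) :
    ∑ i, ∫ x, ‖∂_{b i} f x‖ ^ 2 = ∫ ξ, 4 * π ^ 2 * ‖ξ‖ ^ 2 * ‖𝓕 f ξ‖ ^ 2 := by
  simp_rw [← integral_norm_sq_fourier (∂_{b _} f), ← sum_norm_sq_fourier_lineDerivOp_apply b]
  exact (integral_finsetSum _ fun i _ ↦ (𝓕 (∂_{b i} f)).integrable_norm_sq).symm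

theorem integral_norm_sq_le_of_fourier_eq_zero (b : OrthonormalBasis ι ℝ V) (f : 𝓢(V, H))
    {r : ℝ} (hr : 0 < r) (hf : ∀ ξ, ‖ξ‖ ≤ r → 𝓕 f ξ = 0) :
    ∫ x, ‖f x‖ ^ 2 ≤ (4 * π ^ 2 * r ^ 2)⁻¹ * ∑ i, ∫ x, ‖∂_{b i} f x‖ ^ 2 := by
  have hweight : Integrable (fun ξ ↦ 4 * π ^ 2 * ‖ξ‖ ^ 2 * ‖𝓕 f ξ‖ ^ 2) := by
    simp_rw [← sum_norm_sq_fourier_lineDerivOp_apply b]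
    exact integrable_finsetSum _ fun i _ ↦ (𝓕 (∂_{b i} f)).integrable_norm_sq
  have hle : ∀ ξ, 4 * π ^ 2 * r ^ 2 * ‖𝓕 f ξ‖ ^ 2 ≤ 4 * π ^ 2 * ‖ξ‖ ^ 2 * ‖𝓕 f ξ‖ ^ 2 := by
    intro ξ
    rcases le_or_gt ‖ξ‖ r with hξ | hξ
    · simp [hf ξ hξ]
    · gcongr
  rw [le_inv_mul_iff₀ (by positivity), sum_integral_norm_sq_lineDerivOp b,
    ← integral_norm_sq_fourier, ← integral_const_mul]
  exact integral_mono ((𝓕 f).integrable_norm_sq.const_mul _) hweight hle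

end SchwartzMap

theorem poincare_of_fourier_vanishing_general
    (d : ℕ) (f : SchwartzMap (EuclideanSpace ℝ (Fin d)) ℂ)
    (ω₀ : ℝ) (hω₀ : 0 < ω₀)
    (hvanish : ∀ ω : EuclideanSpace ℝ (Fin d), ‖ω‖ ≤ ω₀ → 𝓕 (⇑f) ω = 0) :
    ∫ x, ‖f x‖ ^ 2 ≤
      (4 * π ^ 2 * ω₀ ^ 2)⁻¹ *
        ∑ j : Fin d, ∫ x, ‖fderiv ℝ (⇑f) x (EuclideanSpace.single j 1)‖ ^ 2 := by
  simpa [SchwartzMap.lineDerivOp_apply_eq_fderiv] using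
    f.integral_norm_sq_le_of_fourier_eq_zero (EuclideanSpace.basisFun (Fin d) ℝ) hω₀ hvanish

/-- Poincaré-type inequality on `ℝ^d` for Schwartz functions whose Fourier transform
vanishes on the ball of radius `ω₀`. -/
theorem poincare_of_fourier_vanishing
    (d : ℕ) (hd : 1 ≤ d) (f : SchwartzMap (EuclideanSpace ℝ (Fin d)) ℂ)
    (ω₀ : ℝ) (hω₀ : 0 < ω₀)
    (hvanish : ∀ ω : EuclideanSpace ℝ (Fin d), ‖ω‖ ≤ ω₀ → 𝓕 (⇑f) ω = 0) :
    ∫ x, ‖f x‖ ^ 2 ≤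
      (4 * π ^ 2 * ω₀ ^ 2)⁻¹ *
        ∑ j : Fin d, ∫ x, ‖fderiv ℝ (⇑f) x (EuclideanSpace.single j 1)‖ ^ 2 :=
  poincare_of_fourier_vanishing_general d f ω₀ hω₀ hvanish
end

section
/- Under the smooth compactly supported parabolic setup, for every t ∈ (0,T) the energy E(s) = ∫_{ℝ^d} v(s,x)² dx is differentiable at s = t with derivative E′(t) = −2 ∫_{ℝ^d} ⟨a(x)(∇v(t,·)(x)), ∇v(t,·)(x)⟩ dx. -/
open MeasureTheory Real
open scoped RealInnerProductSpace

/-- The divergence of a vector field on `ℝ^d`: `div F x = ∑ⱼ ∂ⱼ Fⱼ (x)`. -/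
noncomputable def vecDiv {d : ℕ}
    (F : EuclideanSpace ℝ (Fin d) → EuclideanSpace ℝ (Fin d))
    (x : EuclideanSpace ℝ (Fin d)) : ℝ :=
  ∑ j : Fin d, fderiv ℝ (fun y => F y j) x (EuclideanSpace.single j 1)

/-- Energy identity: under the smooth compactly supported parabolic setup, the
energy `E(s) = ∫ v(s,x)² dx` is differentiable with
`E'(t) = −2 ∫ ⟨a(x)∇v(t,x), ∇v(t,x)⟩ dx`. -/
theorem energy_derivative
    (d : ℕ) (hd : 1 ≤ d)
    (a : EuclideanSpace ℝ (Fin d) →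
      EuclideanSpace ℝ (Fin d) →L[ℝ] EuclideanSpace ℝ (Fin d))
    (ha_smooth : ContDiff ℝ 1 a)
    (ha_symm : ∀ x ζ ξ, ⟪a x ζ, ξ⟫ = ⟪ζ, a x ξ⟫)
    (T : ℝ) (hT : 0 < T)
    (v : ℝ → EuclideanSpace ℝ (Fin d) → ℝ)
    (hv_smooth : ContDiff ℝ (⊤ : ℕ∞) (fun p : ℝ × EuclideanSpace ℝ (Fin d) => v p.1 p.2))
    (K : Set (EuclideanSpace ℝ (Fin d))) (hK : IsCompact K)
    (hsupp : ∀ t ∈ Set.Icc (0 : ℝ) T, Function.support (v t) ⊆ K)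
    (hpde : ∀ t ∈ Set.Ioo (0 : ℝ) T, ∀ x,
      deriv (fun s => v s x) t = vecDiv (fun y => a y (gradient (v t) y)) x) :
    ∀ t ∈ Set.Ioo (0 : ℝ) T,
      HasDerivAt (fun s => ∫ x, (v s x) ^ 2)
        (-2 * ∫ x, ⟪a x (gradient (v t) x), gradient (v t) x⟫) t := by
  intro t ht
  obtain ⟨ht0, htT⟩ := ht
  set w : ℝ × EuclideanSpace ℝ (Fin d) → ℝ := fun p => v p.1 p.2 with hw_def
  have hvc : Continuous w := hv_smooth.continuous
  have hwd : Differentiable ℝ w := hv_smooth.differentiable (by simp)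
  set D : ℝ × EuclideanSpace ℝ (Fin d) → ℝ := fun p => fderiv ℝ w p (1, 0) with hD_def
  have hD : ∀ s x, HasDerivAt (fun r => v r x) (D (s, x)) s := by
    intro s x
    have h1 : HasDerivAt (fun r : ℝ => ((r, x) : ℝ × EuclideanSpace ℝ (Fin d))) (1, 0) s :=
      (hasDerivAt_id s).prodMk (hasDerivAt_const s x)
    exact (hwd (s, x)).hasFDerivAt.comp_hasDerivAt s h1
  have hDc : Continuous D :=
    (hv_smooth.fderiv_right (m := (⊤ : ℕ∞)) (by simp)).continuous.clm_apply continuous_const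
  have hcsupp : ∀ s ∈ Set.Icc (0 : ℝ) T, HasCompactSupport (v s) := by
    intro s hs
    apply HasCompactSupport.intro hK
    intro x hx
    by_contra h
    exact hx (hsupp s hs h)
  -- choice of ε
  set ε : ℝ := min t (T - t) / 2 with hε_def
  have hε : 0 < ε := by
    have : 0 < min t (T - t) := lt_min ht0 (sub_pos.2 htT)
    positivity
  have hball : Metric.closedBall t ε ⊆ Set.Icc (0 : ℝ) T := by
    intro s hs
    rw [Metric.mem_closedBall, Real.dist_eq, abs_le] at hs
    have h1 : min t (T - t) ≤ t := min_le_left _ _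
    have h2 : min t (T - t) ≤ T - t := min_le_right _ _
    constructor <;> [linarith [hs.1]; linarith [hs.2]]
  -- the time derivative of the integrand
  set f' : ℝ → EuclideanSpace ℝ (Fin d) → ℝ := fun s x => 2 * v s x * D (s, x) with hf'_def
  have hf'c : Continuous fun p : ℝ × EuclideanSpace ℝ (Fin d) => 2 * v p.1 p.2 * D p :=
    (continuous_const.mul hvc).mul hDc
  obtain ⟨C, hC⟩ :=
    ((isCompact_closedBall t ε).prod hK).exists_bound_of_continuousOn hf'c.continuousOn
  set bound : EuclideanSpace ℝ (Fin d) → ℝ := K.indicator fun _ => C with hbound_def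
  have h_bound : ∀ᵐ x : EuclideanSpace ℝ (Fin d), ∀ s ∈ Metric.ball t ε, ‖f' s x‖ ≤ bound x := by
    apply Filter.Eventually.of_forall
    intro x s hs
    by_cases hx : x ∈ K
    · rw [hbound_def, Set.indicator_of_mem hx]
      exact hC (s, x) ⟨Metric.ball_subset_closedBall hs, hx⟩
    · have hv0 : v s x = 0 := by
        by_contra h
        exact hx (hsupp s (hball (Metric.ball_subset_closedBall hs)) h)
      rw [hbound_def, Set.indicator_of_notMem hx]
      simp [hf'_def, hv0]
  have hbound_int : Integrable bound := by
    rw [hbound_def, integrable_indicator_iff hK.measurableSet]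
    exact integrableOn_const hK.measure_lt_top.ne
  have hF_meas : ∀ᶠ s in nhds t, AEStronglyMeasurable (fun x => v s x ^ 2) volume := by
    apply Filter.Eventually.of_forall
    intro s
    exact ((hvc.comp (Continuous.prodMk_right s)).pow 2).aestronglyMeasurable
  have hF_int : Integrable (fun x => v t x ^ 2) := by
    apply Continuous.integrable_of_hasCompactSupport
    · exact (hvc.comp (Continuous.prodMk_right t)).pow 2
    · exact (hcsupp t ⟨ht0.le, htT.le⟩).comp_left (g := fun r : ℝ => r ^ 2) (by simp)
  have hF'_meas : AEStronglyMeasurable (f' t) volume :=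
    ((continuous_const.mul (hvc.comp (Continuous.prodMk_right t))).mul
      (hDc.comp (Continuous.prodMk_right t))).aestronglyMeasurable
  have h_diff : ∀ᵐ x : EuclideanSpace ℝ (Fin d), ∀ s ∈ Metric.ball t ε,
      HasDerivAt (fun r => v r x ^ 2) (f' s x) s := by
    apply Filter.Eventually.of_forall
    intro x s hs
    have := (hD s x).pow 2
    rw [show f' s x = ↑2 * v s x ^ (2 - 1) * D (s, x) by show 2 * v s x * D (s, x) = _; norm_num]
    exact this
  have main := hasDerivAt_integral_of_dominated_loc_of_deriv_le (Metric.ball_mem_nhds t hε) hF_meas hF_int hF'_meas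
    h_bound hbound_int h_diff
  -- now the elliptic identity
  have hu : ContDiff ℝ (⊤ : ℕ∞) (v t) := hv_smooth.comp (contDiff_const.prodMk contDiff_id)
  have hcu : HasCompactSupport (v t) := hcsupp t ⟨ht0.le, htT.le⟩
  have hgradc : ContDiff ℝ (⊤ : ℕ∞) (gradient (v t)) :=
    ((InnerProductSpace.toDual ℝ (EuclideanSpace ℝ (Fin d))).symm.contDiff).comp (hu.fderiv_right (m := (⊤ : ℕ∞)) (by simp))
  set G : EuclideanSpace ℝ (Fin d) → EuclideanSpace ℝ (Fin d) := fun y => a y (gradient (v t) y) with hG_def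
  have hG : ContDiff ℝ 1 G := ha_smooth.clm_apply (hgradc.of_le (by simp))
  have hGj : ∀ j : Fin d, ContDiff ℝ 1 fun y => G y j := fun j => by
    exact (EuclideanSpace.proj j).contDiff.comp hG
  have hginner : ∀ (x : EuclideanSpace ℝ (Fin d)) (j : Fin d),
      fderiv ℝ (v t) x (EuclideanSpace.single j 1) = gradient (v t) x j := by
    intro x j
    have h1 : ⟪gradient (v t) x, EuclideanSpace.single j (1 : ℝ)⟫ =
        fderiv ℝ (v t) x (EuclideanSpace.single j 1) :=
      InnerProductSpace.toDual_symm_apply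
    rw [EuclideanSpace.inner_single_right] at h1
    simpa using h1.symm
  have hint1 : ∀ j : Fin d,
      Integrable (fun x => fderiv ℝ (v t) x (EuclideanSpace.single j 1) * G x j) := by
    intro j
    apply Continuous.integrable_of_hasCompactSupport
    · exact ((hu.fderiv_right (m := (⊤ : ℕ∞)) (by simp)).continuous.clm_apply continuous_const).mul
        (hGj j).continuous
    · exact ((hcu.fderiv (𝕜 := ℝ)).comp_left
        (g := fun L : EuclideanSpace ℝ (Fin d) →L[ℝ] ℝ => L (EuclideanSpace.single j 1)) (by simp)).mul_right
  have hint2 : ∀ j : Fin d,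
      Integrable (fun x => v t x * fderiv ℝ (fun y => G y j) x (EuclideanSpace.single j 1)) := by
    intro j
    apply Continuous.integrable_of_hasCompactSupport
    · exact (hvc.comp (Continuous.prodMk_right t)).mul
        (((hGj j).fderiv_right (m := 0) (by norm_num)).continuous.clm_apply continuous_const)
    · exact hcu.mul_right
  have hint3 : ∀ j : Fin d, Integrable (fun x => v t x * G x j) := by
    intro j
    apply Continuous.integrable_of_hasCompactSupport
    · exact (hvc.comp (Continuous.prodMk_right t)).mul (hGj j).continuous
    · exact hcu.mul_right
  have hibp : ∀ j : Fin d,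
      ∫ x, v t x * fderiv ℝ (fun y => G y j) x (EuclideanSpace.single j 1) =
        - ∫ x, fderiv ℝ (v t) x (EuclideanSpace.single j 1) * G x j := fun j =>
    integral_mul_fderiv_eq_neg_fderiv_mul_of_integrable (hint1 j) (hint2 j) (hint3 j)
      (fun x _ => hu.differentiable (by simp) x) (fun x _ => (hGj j).differentiable (by norm_num) x)
  have hDdiv : ∀ x : EuclideanSpace ℝ (Fin d), D (t, x) = vecDiv G x := by
    intro x
    rw [← (hD t x).deriv]
    exact hpde t ⟨ht0, htT⟩ x
  have key : ∫ x, f' t x = -2 * ∫ x, ⟪a x (gradient (v t) x), gradient (v t) x⟫ := by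
    have e1 : (fun x => f' t x) = fun x =>
        ∑ j : Fin d, 2 * (v t x * fderiv ℝ (fun y => G y j) x (EuclideanSpace.single j 1)) := by
      funext x
      rw [hf'_def]
      simp only [hDdiv x, vecDiv, Finset.mul_sum]
      exact Finset.sum_congr rfl fun j _ => by ring
    have e3 : ∫ x, ⟪a x (gradient (v t) x), gradient (v t) x⟫ =
        ∑ j : Fin d, ∫ x, fderiv ℝ (v t) x (EuclideanSpace.single j 1) * G x j := by
      rw [← integral_finset_sum _ fun j _ => hint1 j]
      congr 1
      funext x
      rw [show (⟪a x (gradient (v t) x), gradient (v t) x⟫ : ℝ) =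
          ∑ j : Fin d, G x j * gradient (v t) x j from by
        rw [PiLp.inner_apply]; simp [RCLike.inner_apply, hG_def]
        exact Finset.sum_congr rfl fun _ _ => mul_comm _ _]
      exact Finset.sum_congr rfl fun j _ => by rw [hginner]; ring
    rw [e1, integral_finset_sum _ fun j _ => (hint2 j).const_mul 2]
    rw [e3, Finset.mul_sum]
    refine Finset.sum_congr rfl fun j _ => ?_
    rw [integral_const_mul, hibp j]
    ring
  rw [← key]
  exact main.2
end

section
/- Under the smooth compactly supported parabolic setup, assume in addition that a(x) is positive semidefinite for every x, i.e. ⟨a(x)ζ, ζ⟩ ≥ 0 for all x ∈ ℝ^d and ζ ∈ ℝ^d. Then for every t ∈ [0,T]: (∫_{ℝ^d} v(t,x)² dx)^{1/2} ≤ (∫_{ℝ^d} g(x)² dx)^{1/2}, and consequently the space–time norm satisfies (∫_0^t ∫_{ℝ^d} v(s,x)² dx ds)^{1/2} ≤ √t · (∫_{ℝ^d} g(x)² dx)^{1/2}. -/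
open MeasureTheory Real
open scoped RealInnerProductSpace

section Aux

lemma euclidean_sum_apply' {d n : ℕ} (f : Fin n → EuclideanSpace ℝ (Fin d)) (i : Fin d) :
    (∑ j, f j) i = ∑ j, f j i := by
  induction (Finset.univ : Finset (Fin n)) using Finset.induction with
  | empty => simp
  | @insert _ _ h ih => rw [Finset.sum_insert h, Finset.sum_insert h, ← ih]; rfl

lemma euclidean_repr {d : ℕ} (z : EuclideanSpace ℝ (Fin d)) :
    z = ∑ j, z j • EuclideanSpace.single j (1:ℝ) := by
  ext i
  rw [euclidean_sum_apply']
  simp [EuclideanSpace.single_apply]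

lemma inner_gradient_apply {d : ℕ} (f : EuclideanSpace ℝ (Fin d) → ℝ)
    (x y : EuclideanSpace ℝ (Fin d)) :
    ⟪gradient f x, y⟫ = fderiv ℝ f x y := by
  simp [gradient, InnerProductSpace.toDual_symm_apply]

lemma fderiv_coord {d : ℕ} {F : EuclideanSpace ℝ (Fin d) → EuclideanSpace ℝ (Fin d)}
    {x : EuclideanSpace ℝ (Fin d)} (hF : DifferentiableAt ℝ F x) (j : Fin d)
    (w : EuclideanSpace ℝ (Fin d)) :
    fderiv ℝ (fun y => F y j) x w = (fderiv ℝ F x w) j := by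
  have h : HasFDerivAt (fun y => F y j) ((EuclideanSpace.proj j).comp (fderiv ℝ F x)) x :=
    (EuclideanSpace.proj (𝕜 := ℝ) j).hasFDerivAt.comp x hF.hasFDerivAt
  rw [h.fderiv]; rfl

lemma vecDiv_eq_zero_of_nmem {d : ℕ} {F : EuclideanSpace ℝ (Fin d) → EuclideanSpace ℝ (Fin d)}
    {K : Set (EuclideanSpace ℝ (Fin d))} (hKc : IsClosed K)
    (hsupp : Function.support F ⊆ K) {x : EuclideanSpace ℝ (Fin d)} (hx : x ∉ K) :
    vecDiv F x = 0 := by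
  unfold vecDiv
  refine Finset.sum_eq_zero fun j _ => ?_
  have hev : (fun y => F y j) =ᶠ[nhds x] (fun _ => (0:ℝ)) := by
    filter_upwards [hKc.isOpen_compl.mem_nhds hx] with y hy
    have hFy : F y = 0 := by
      by_contra h
      exact hy (hsupp (Function.mem_support.2 h))
    simp [hFy]
  rw [hev.fderiv_eq]
  simp

lemma vecDiv_continuous {d : ℕ} {F : EuclideanSpace ℝ (Fin d) → EuclideanSpace ℝ (Fin d)}
    (hF : ContDiff ℝ 1 F) : Continuous (vecDiv F) := by
  have h : ∀ (x : EuclideanSpace ℝ (Fin d)) (j : Fin d),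
      fderiv ℝ (fun y => F y j) x (EuclideanSpace.single j 1)
        = (fderiv ℝ F x (EuclideanSpace.single j 1)) j :=
    fun x j => fderiv_coord (hF.differentiable one_ne_zero x) j _
  unfold vecDiv
  simp_rw [h]
  refine continuous_finset_sum _ fun j _ => ?_
  exact (EuclideanSpace.proj (𝕜 := ℝ) j).continuous.comp
    ((hF.continuous_fderiv one_ne_zero).clm_apply continuous_const)

lemma integral_vecDiv_eq_zero {d : ℕ} (hd : 1 ≤ d)
    {F : EuclideanSpace ℝ (Fin d) → EuclideanSpace ℝ (Fin d)}
    (hF : ContDiff ℝ 1 F) {K : Set (EuclideanSpace ℝ (Fin d))} (hK : IsCompact K)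
    (hsupp : Function.support F ⊆ K) :
    ∫ x, vecDiv F x = 0 := by
  obtain ⟨n, rfl⟩ : ∃ n, d = n + 1 := ⟨d - 1, by omega⟩
  set ψ : EuclideanSpace ℝ (Fin (n + 1)) ≃L[ℝ] (Fin (n + 1) → ℝ) :=
    EuclideanSpace.equiv (Fin (n + 1)) ℝ with hψ
  obtain ⟨r, hr⟩ := hK.isBounded.subset_closedBall 0
  set R : ℝ := max r 0 + 1 with hRdef
  have habs : ∀ x ∈ K, ∀ i : Fin (n + 1), |x i| ≤ max r 0 := by
    intro x hx i
    have h1 : ‖x‖ ≤ r := by simpa using hr hx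
    have h2 : |x i| ≤ ‖x‖ := by
      have := abs_real_inner_le_norm (EuclideanSpace.single i (1:ℝ)) x
      simpa [EuclideanSpace.inner_single_left] using this
    exact h2.trans (h1.trans (le_max_left _ _))
  have hFd : Differentiable ℝ F := hF.differentiable one_ne_zero
  set G : (Fin (n + 1) → ℝ) → (Fin (n + 1) → ℝ) := fun y => ψ (F (ψ.symm y)) with hG
  set G' : (Fin (n + 1) → ℝ) → (Fin (n + 1) → ℝ) →L[ℝ] (Fin (n + 1) → ℝ) := fun y =>
    ((ψ : EuclideanSpace ℝ (Fin (n + 1)) →L[ℝ] (Fin (n + 1) → ℝ)).comp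
        (fderiv ℝ F (ψ.symm y))).comp
      (ψ.symm : (Fin (n + 1) → ℝ) →L[ℝ] EuclideanSpace ℝ (Fin (n + 1))) with hG'
  have hGd : ∀ y, HasFDerivAt G (G' y) y := fun y =>
    (ψ.hasFDerivAt.comp _ ((hFd _).hasFDerivAt)).comp y ψ.symm.hasFDerivAt
  have hdiv : ∀ y : Fin (n + 1) → ℝ,
      (∑ i : Fin (n + 1), G' y (Pi.single i 1) i) = vecDiv F (ψ.symm y) := by
    intro y
    unfold vecDiv
    refine Finset.sum_congr rfl fun j _ => ?_
    rw [fderiv_coord (hFd _) j]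
    rfl
  have hKsub : ∀ x ∈ K,
      (ψ x) ∈ Set.Icc (fun _ : Fin (n + 1) => -R) (fun _ : Fin (n + 1) => R) := by
    intro x hx
    rw [Set.mem_Icc]
    constructor <;> intro i <;>
      · obtain ⟨h1, h2⟩ := abs_le.1 (habs x hx i)
        show _ ≤ _
        have h0 : (ψ x) i = x i := rfl
        simp only [hRdef, h0]
        linarith
  have hle : (fun _ : Fin (n + 1) => -R) ≤ (fun _ : Fin (n + 1) => R) := by
    intro i
    have := le_max_right r (0:ℝ)
    simp only [hRdef]
    linarith
  have hGc : Continuous G := ψ.continuous.comp (hF.continuous.comp ψ.symm.continuous)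
  have hdiv' : (fun y => ∑ i : Fin (n + 1), G' y (Pi.single i 1) i)
      = fun y => vecDiv F (ψ.symm y) := funext hdiv
  have Hi : IntegrableOn (fun y => ∑ i : Fin (n + 1), G' y (Pi.single i 1) i)
      (Set.Icc (fun _ : Fin (n + 1) => -R) (fun _ : Fin (n + 1) => R)) := by
    rw [hdiv']
    exact ((vecDiv_continuous hF).comp ψ.symm.continuous).continuousOn.integrableOn_compact
      isCompact_Icc
  have key := MeasureTheory.integral_divergence_of_hasFDerivAt_off_countable
    (fun _ : Fin (n + 1) => -R) (fun _ : Fin (n + 1) => R) hle G G' ∅ Set.countable_empty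
    hGc.continuousOn (fun x _ => hGd x) Hi
  have hface : ∀ (i : Fin (n + 1)) (c : ℝ), |c| = R → ∀ x : Fin n → ℝ,
      G (i.insertNth c x) i = 0 := by
    intro i c hc x
    have hnm : ψ.symm (i.insertNth c x) ∉ K := by
      intro hmem
      have h2 := habs _ hmem i
      have hco : (ψ.symm (i.insertNth c x) : EuclideanSpace ℝ (Fin (n + 1))) i = c := by
        rw [hψ]
        simp [PiLp.continuousLinearEquiv_symm_apply]
      rw [hco] at h2
      have : |c| ≤ max r 0 := (abs_le.2 (abs_le.1 h2))
      rw [hc, hRdef] at this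
      linarith
    have hF0 : F (ψ.symm (i.insertNth c x)) = 0 := by
      by_contra h
      exact hnm (hsupp (Function.mem_support.2 h))
    show (F (ψ.symm (i.insertNth c x)) : EuclideanSpace ℝ (Fin (n + 1))) i = 0
    rw [hF0]
    rfl
  have hRpos : 0 < R := by
    have := le_max_right r (0:ℝ); simp only [hRdef]; linarith
  have hzero : (∑ i : Fin (n + 1),
      ((∫ x in Set.Icc ((fun _ : Fin (n + 1) => -R) ∘ i.succAbove)
          ((fun _ : Fin (n + 1) => R) ∘ i.succAbove),
          G (i.insertNth ((fun _ : Fin (n + 1) => R) i) x) i) -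
        ∫ x in Set.Icc ((fun _ : Fin (n + 1) => -R) ∘ i.succAbove)
          ((fun _ : Fin (n + 1) => R) ∘ i.succAbove),
          G (i.insertNth ((fun _ : Fin (n + 1) => -R) i) x) i)) = 0 := by
    refine Finset.sum_eq_zero fun i _ => ?_
    have hf1 : ∀ x : Fin n → ℝ, G (i.insertNth ((fun _ : Fin (n + 1) => R) i) x) i = 0 :=
      hface i R (abs_of_pos hRpos)
    have hf2 : ∀ x : Fin n → ℝ, G (i.insertNth ((fun _ : Fin (n + 1) => -R) i) x) i = 0 :=
      hface i (-R) (by rw [abs_neg]; exact abs_of_pos hRpos)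
    simp only [hf1, hf2, integral_zero, sub_zero]
  rw [hzero] at key
  rw [hdiv'] at key
  have hout : ∀ y ∉ Set.Icc (fun _ : Fin (n + 1) => -R) (fun _ : Fin (n + 1) => R),
      vecDiv F (ψ.symm y) = 0 := by
    intro y hy
    refine vecDiv_eq_zero_of_nmem hK.isClosed hsupp (fun hmem => hy ?_)
    have := hKsub _ hmem
    rwa [ψ.apply_symm_apply] at this
  rw [setIntegral_eq_integral_of_forall_compl_eq_zero hout] at key
  have hmp : ∫ y : Fin (n + 1) → ℝ, vecDiv F (ψ.symm y) = ∫ x, vecDiv F x := by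
    have h := (EuclideanSpace.volume_preserving_symm_measurableEquiv_toLp (Fin (n + 1))).symm
    exact h.integral_comp (MeasurableEquiv.measurableEmbedding _) (vecDiv F)
  rw [hmp] at key
  exact key

lemma gradient_contDiff' {d : ℕ} {u : EuclideanSpace ℝ (Fin d) → ℝ}
    (hu : ContDiff ℝ (⊤ : ℕ∞) u) : ContDiff ℝ (⊤ : ℕ∞) (fun y => gradient u y) := by
  have h1 : ContDiff ℝ (⊤ : ℕ∞) (fderiv ℝ u) := hu.fderiv_right (by simp)
  exact ((InnerProductSpace.toDual ℝ (EuclideanSpace ℝ (Fin d))).symm.contDiff).comp h1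

lemma gradient_eq_zero_of_nmem {d : ℕ} {u : EuclideanSpace ℝ (Fin d) → ℝ}
    {K : Set (EuclideanSpace ℝ (Fin d))} (hKc : IsClosed K)
    (hsupp : Function.support u ⊆ K) {x} (hx : x ∉ K) : gradient u x = 0 := by
  have hev : u =ᶠ[nhds x] (fun _ => (0:ℝ)) := by
    filter_upwards [hKc.isOpen_compl.mem_nhds hx] with y hy
    by_contra h
    exact hy (hsupp (Function.mem_support.2 h))
  rw [gradient, hev.fderiv_eq, fderiv_const_apply]
  simp

lemma integral_mul_vecDiv_nonpos {d : ℕ} (hd : 1 ≤ d)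
    (a : EuclideanSpace ℝ (Fin d) →
      EuclideanSpace ℝ (Fin d) →L[ℝ] EuclideanSpace ℝ (Fin d))
    (ha_smooth : ContDiff ℝ 1 a)
    (ha_pos : ∀ x ζ, 0 ≤ ⟪a x ζ, ζ⟫)
    (u : EuclideanSpace ℝ (Fin d) → ℝ) (hu : ContDiff ℝ (⊤ : ℕ∞) u)
    {K : Set (EuclideanSpace ℝ (Fin d))} (hK : IsCompact K)
    (hsupp : Function.support u ⊆ K) :
    ∫ x, u x * vecDiv (fun y => a y (gradient u y)) x ≤ 0 := by
  set Fa : EuclideanSpace ℝ (Fin d) → EuclideanSpace ℝ (Fin d) :=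
    fun y => a y (gradient u y) with hFadef
  have hgrad : ContDiff ℝ (⊤ : ℕ∞) (fun y => gradient u y) := gradient_contDiff' hu
  have hFa : ContDiff ℝ 1 Fa := ha_smooth.clm_apply (hgrad.of_le (by simp))
  have hgs : ∀ x ∉ K, gradient u x = 0 := fun x hx =>
    gradient_eq_zero_of_nmem hK.isClosed hsupp hx
  have hFas : Function.support Fa ⊆ K := by
    intro x hx
    by_contra h
    apply hx
    show Fa x = 0
    rw [hFadef]
    simp only [hgs x h, map_zero]
  set P : EuclideanSpace ℝ (Fin d) → EuclideanSpace ℝ (Fin d) :=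
    fun y => u y • Fa y with hPdef
  have hP : ContDiff ℝ 1 P := (hu.of_le (by simp)).smul hFa
  have hPs : Function.support P ⊆ K := by
    intro x hx
    by_contra h
    apply hx
    show u x • Fa x = 0
    have : u x = 0 := by
      by_contra h'
      exact h (hsupp (Function.mem_support.2 h'))
    simp [this]
  have hud : Differentiable ℝ u := hu.differentiable (by simp)
  have hFad : Differentiable ℝ Fa := hFa.differentiable one_ne_zero
  have hdivP : ∀ x, vecDiv P x
      = u x * vecDiv Fa x + fderiv ℝ u x (Fa x) := by
    intro x
    have hcoord : ∀ j : Fin d, (fun y => P y j) = fun y => u y * Fa y j := by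
      intro j; rfl
    unfold vecDiv
    calc (∑ j : Fin d, fderiv ℝ (fun y => P y j) x (EuclideanSpace.single j 1))
        = ∑ j : Fin d, (u x * fderiv ℝ (fun y => Fa y j) x (EuclideanSpace.single j 1)
            + Fa x j * fderiv ℝ u x (EuclideanSpace.single j 1)) := by
          refine Finset.sum_congr rfl fun j _ => ?_
          rw [hcoord j]
          have hdFj : DifferentiableAt ℝ (fun y => Fa y j) x :=
            (EuclideanSpace.proj (𝕜 := ℝ) j).differentiableAt.comp x (hFad x)
          rw [fderiv_fun_mul (hud x) hdFj]
          simp [smul_eq_mul]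
      _ = u x * vecDiv Fa x + fderiv ℝ u x (Fa x) := by
          rw [Finset.sum_add_distrib, ← Finset.mul_sum]
          congr 1
          conv_rhs => rw [euclidean_repr (Fa x)]
          rw [map_sum]
          refine Finset.sum_congr rfl fun j _ => ?_
          rw [(fderiv ℝ u x).map_smul]
          simp [smul_eq_mul]
  have hI1c : Continuous fun x => u x * vecDiv Fa x :=
    hu.continuous.mul (vecDiv_continuous hFa)
  have hI2c : Continuous fun x => fderiv ℝ u x (Fa x) := by
    have : ∀ x, fderiv ℝ u x (Fa x) = ⟪gradient u x, Fa x⟫ :=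
      fun x => (inner_gradient_apply u x (Fa x)).symm
    simp only [this]
    exact (hgrad.continuous).inner hFa.continuous
  have hI1s : HasCompactSupport fun x => u x * vecDiv Fa x := by
    apply HasCompactSupport.intro hK
    intro x hx
    have : u x = 0 := by
      by_contra h'
      exact hx (hsupp (Function.mem_support.2 h'))
    simp [this]
  have hI2s : HasCompactSupport fun x => fderiv ℝ u x (Fa x) := by
    apply HasCompactSupport.intro hK
    intro x hx
    have : Fa x = 0 := by
      by_contra h'
      exact hx (hFas (Function.mem_support.2 h'))
    simp [this]
  have hI1 : Integrable fun x => u x * vecDiv Fa x :=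
    hI1c.integrable_of_hasCompactSupport hI1s
  have hI2 : Integrable fun x => fderiv ℝ u x (Fa x) :=
    hI2c.integrable_of_hasCompactSupport hI2s
  have hzero : ∫ x, vecDiv P x = 0 := integral_vecDiv_eq_zero hd hP hK hPs
  have hsplit : ∫ x, vecDiv P x
      = (∫ x, u x * vecDiv Fa x) + ∫ x, fderiv ℝ u x (Fa x) := by
    rw [← integral_add hI1 hI2]
    exact integral_congr_ae (Filter.Eventually.of_forall hdivP)
  have hnonneg : 0 ≤ ∫ x, fderiv ℝ u x (Fa x) := by
    refine integral_nonneg fun x => ?_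
    rw [← inner_gradient_apply u x (Fa x)]
    rw [real_inner_comm]
    exact ha_pos x (gradient u x)
  linarith [hsplit ▸ hzero]

end Aux

/-- Under the smooth compactly supported parabolic setup with positive semidefinite
coefficient `a`, the `L²` norm of `v(t,·)` is bounded by that of the initial data
`g = v(0,·)`, and the space–time `L²` norm by `√t ‖g‖_{L²}`. -/
theorem parabolic_L2_monotone
    (d : ℕ) (hd : 1 ≤ d)
    (a : EuclideanSpace ℝ (Fin d) →
      EuclideanSpace ℝ (Fin d) →L[ℝ] EuclideanSpace ℝ (Fin d))
    (ha_smooth : ContDiff ℝ 1 a)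
    (ha_symm : ∀ x ζ ξ, ⟪a x ζ, ξ⟫ = ⟪ζ, a x ξ⟫)
    (ha_pos : ∀ x ζ, 0 ≤ ⟪a x ζ, ζ⟫)
    (T : ℝ) (hT : 0 < T)
    (v : ℝ → EuclideanSpace ℝ (Fin d) → ℝ)
    (hv_smooth : ContDiff ℝ (⊤ : ℕ∞) (fun p : ℝ × EuclideanSpace ℝ (Fin d) => v p.1 p.2))
    (K : Set (EuclideanSpace ℝ (Fin d))) (hK : IsCompact K)
    (hsupp : ∀ t ∈ Set.Icc (0 : ℝ) T, Function.support (v t) ⊆ K)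
    (hpde : ∀ t ∈ Set.Ioo (0 : ℝ) T, ∀ x,
      deriv (fun s => v s x) t = vecDiv (fun y => a y (gradient (v t) y)) x) :
    ∀ t ∈ Set.Icc (0 : ℝ) T,
      (∫ x, (v t x) ^ 2) ^ ((1 : ℝ) / 2) ≤ (∫ x, (v 0 x) ^ 2) ^ ((1 : ℝ) / 2) ∧
      (∫ s in (0 : ℝ)..t, ∫ x, (v s x) ^ 2) ^ ((1 : ℝ) / 2) ≤
        Real.sqrt t * (∫ x, (v 0 x) ^ 2) ^ ((1 : ℝ) / 2) := by
  have hVd : Differentiable ℝ (fun p : ℝ × EuclideanSpace ℝ (Fin d) => v p.1 p.2) :=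
    hv_smooth.differentiable (by simp)
  set W : ℝ × EuclideanSpace ℝ (Fin d) → ℝ :=
    fun p => fderiv ℝ (fun q : ℝ × EuclideanSpace ℝ (Fin d) => v q.1 q.2) p (1, 0) with hWdef
  have hWc : Continuous W :=
    (hv_smooth.continuous_fderiv (by simp)).clm_apply continuous_const
  have hW : ∀ (t : ℝ) (x), HasDerivAt (fun s => v s x) (W (t, x)) t := by
    intro t x
    have h2 : HasDerivAt (fun s : ℝ => (s, x)) ((1:ℝ), (0 : EuclideanSpace ℝ (Fin d))) t :=
      (hasDerivAt_id t).prodMk (hasDerivAt_const t x)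
    exact (hVd (t, x)).hasFDerivAt.comp_hasDerivAt t h2
  have hvt_smooth : ∀ t : ℝ, ContDiff ℝ (⊤ : ℕ∞) (v t) := fun t =>
    hv_smooth.comp (contDiff_const.prodMk contDiff_id)
  have hvt_cont : ∀ t : ℝ, Continuous (v t) := fun t => (hvt_smooth t).continuous
  set Ener : ℝ → ℝ := fun t => ∫ x, (v t x) ^ 2 with hEner
  have hEnonneg : ∀ t, 0 ≤ Ener t := fun t => integral_nonneg fun x => sq_nonneg _
  -- compact support of v t
  have hv0 : ∀ t ∈ Set.Icc (0:ℝ) T, ∀ x ∉ K, v t x = 0 := by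
    intro t ht x hx
    by_contra h
    exact hx (hsupp t ht (Function.mem_support.2 h))
  -- bounds on [0,T] × K
  obtain ⟨C₁, hC₁⟩ := ((isCompact_Icc (a := (0:ℝ)) (b := T)).prod hK).exists_bound_of_continuousOn
    (f := fun p : ℝ × EuclideanSpace ℝ (Fin d) => 2 * v p.1 p.2 * W p)
    (((continuous_const.mul hv_smooth.continuous).mul hWc)).continuousOn
  obtain ⟨C₂, hC₂⟩ := ((isCompact_Icc (a := (0:ℝ)) (b := T)).prod hK).exists_bound_of_continuousOn
    (f := fun p : ℝ × EuclideanSpace ℝ (Fin d) => (v p.1 p.2) ^ 2)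
    ((hv_smooth.continuous.pow 2)).continuousOn
  have hKmeas : MeasurableSet K := hK.isClosed.measurableSet
  have hbound1_int : Integrable (K.indicator fun _ => C₁) := by
    refine (IntegrableOn.integrable_indicator ?_ hKmeas)
    exact integrableOn_const hK.measure_lt_top.ne
  have hbound2_int : Integrable (K.indicator fun _ => C₂) := by
    refine (IntegrableOn.integrable_indicator ?_ hKmeas)
    exact integrableOn_const hK.measure_lt_top.ne
  -- integrability of v t ^ 2
  have hvInt : ∀ t ∈ Set.Icc (0:ℝ) T, Integrable fun x => (v t x) ^ 2 := by
    intro t ht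
    refine ((hvt_cont t).pow 2).integrable_of_hasCompactSupport ?_
    apply HasCompactSupport.intro hK
    intro x hx
    simp [hv0 t ht x hx]
  -- the derivative of the energy on (0, T)
  have hEderiv : ∀ t ∈ Set.Ioo (0:ℝ) T,
      HasDerivAt Ener (∫ x, 2 * v t x * W (t, x)) t := by
    intro t ht
    set ε : ℝ := min t (T - t) with hε
    have hεpos : 0 < ε := lt_min ht.1 (by linarith [ht.2])
    have hball : ∀ s ∈ Metric.ball t ε, s ∈ Set.Icc (0:ℝ) T := by
      intro s hs
      rw [Metric.mem_ball, Real.dist_eq, abs_lt] at hs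
      constructor <;>
        [ (have := min_le_left t (T - t); nlinarith [hs.1]) ;
          (have := min_le_right t (T - t); nlinarith [hs.2]) ]
    have := hasDerivAt_integral_of_dominated_loc_of_deriv_le
      (F := fun s x => (v s x) ^ 2)
      (F' := fun s x => 2 * v s x * W (s, x))
      (bound := K.indicator fun _ => C₁) (x₀ := t) (s := Metric.ball t ε) (Metric.ball_mem_nhds t hεpos)
      (Filter.Eventually.of_forall fun s =>
        (((hvt_cont s).pow 2)).aestronglyMeasurable)
      (hvInt t (Set.mem_Icc_of_Ioo ht))
      ((continuous_const.mul (hvt_cont t)).mul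
        (hWc.comp (continuous_const.prodMk continuous_id))).aestronglyMeasurable
      (Filter.Eventually.of_forall ?_)
      hbound1_int
      (Filter.Eventually.of_forall ?_)
    · exact this.2
    · -- bound
      intro x s hs
      by_cases hx : x ∈ K
      · have hmem : (s, x) ∈ Set.Icc (0:ℝ) T ×ˢ K := ⟨hball s hs, hx⟩
        have := hC₁ _ hmem
        simpa [Set.indicator_of_mem hx] using this
      · rw [Set.indicator_of_notMem hx]
        have : v s x = 0 := hv0 s (hball s hs) x hx
        simp [this]
    · -- derivative
      intro x s hs
      have := (hW s x).fun_pow 2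
      simpa [mul_assoc] using this
  -- derivative is nonpositive
  have hEderiv_nonpos : ∀ t ∈ Set.Ioo (0:ℝ) T, (∫ x, 2 * v t x * W (t, x)) ≤ 0 := by
    intro t ht
    have hWpde : ∀ x, W (t, x) = vecDiv (fun y => a y (gradient (v t) y)) x := by
      intro x
      rw [← (hW t x).deriv]
      exact hpde t ht x
    have : (∫ x, 2 * v t x * W (t, x))
        = 2 * ∫ x, v t x * vecDiv (fun y => a y (gradient (v t) y)) x := by
      rw [← MeasureTheory.integral_const_mul]
      congr 1
      funext x
      rw [hWpde x]
      ring
    rw [this]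
    have := integral_mul_vecDiv_nonpos hd a ha_smooth ha_pos (v t) (hvt_smooth t) hK
      (hsupp t (Set.mem_Icc_of_Ioo ht))
    linarith
  -- continuity of the energy on [0,T]
  have hEcont : ContinuousOn Ener (Set.Icc (0:ℝ) T) := by
    refine continuousOn_of_dominated
      (fun t ht => ((hvt_cont t).pow 2).aestronglyMeasurable)
      (fun t ht => Filter.Eventually.of_forall fun x => ?_)
      hbound2_int
      (Filter.Eventually.of_forall fun x =>
        ((hv_smooth.continuous.comp (continuous_id.prodMk continuous_const)).pow
          2).continuousOn)
    by_cases hx : x ∈ K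
    · have := hC₂ (t, x) ⟨ht, hx⟩
      simpa [Set.indicator_of_mem hx] using this
    · rw [Set.indicator_of_notMem hx]
      simp [hv0 t ht x hx]
  -- the energy is antitone
  have hanti : AntitoneOn Ener (Set.Icc (0:ℝ) T) := by
    refine antitoneOn_of_deriv_nonpos (convex_Icc 0 T) hEcont ?_ ?_
    · intro t ht
      rw [interior_Icc] at ht
      exact (hEderiv t ht).differentiableAt.differentiableWithinAt
    · intro t ht
      rw [interior_Icc] at ht
      rw [(hEderiv t ht).deriv]
      exact hEderiv_nonpos t ht
  intro t ht
  have h0mem : (0:ℝ) ∈ Set.Icc (0:ℝ) T := ⟨le_refl _, hT.le⟩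
  have hEt : Ener t ≤ Ener 0 := hanti h0mem ht ht.1
  constructor
  · exact Real.rpow_le_rpow (hEnonneg t) hEt (by norm_num)
  · have htnn : 0 ≤ t := ht.1
    have hEii : IntervalIntegrable Ener volume 0 t := by
      refine ContinuousOn.intervalIntegrable ?_
      rw [Set.uIcc_of_le htnn]
      exact hEcont.mono (Set.Icc_subset_Icc le_rfl ht.2)
    have hmono : (∫ s in (0:ℝ)..t, Ener s) ≤ ∫ s in (0:ℝ)..t, Ener 0 := by
      refine intervalIntegral.integral_mono_on htnn hEii intervalIntegrable_const ?_
      intro s hs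
      exact hanti h0mem ⟨hs.1, hs.2.trans ht.2⟩ hs.1
    have hconst : (∫ s in (0:ℝ)..t, Ener 0) = t * Ener 0 := by
      rw [intervalIntegral.integral_const]
      simp [smul_eq_mul]
    have hlhs_nonneg : 0 ≤ ∫ s in (0:ℝ)..t, Ener s :=
      intervalIntegral.integral_nonneg htnn fun s _ => hEnonneg s
    have h1 : (∫ s in (0:ℝ)..t, Ener s) ^ ((1:ℝ)/2) ≤ (t * Ener 0) ^ ((1:ℝ)/2) := by
      refine Real.rpow_le_rpow hlhs_nonneg ?_ (by norm_num)
      rw [← hconst]; exact hmono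
    calc (∫ s in (0:ℝ)..t, ∫ x, (v s x) ^ 2) ^ ((1:ℝ)/2)
        ≤ (t * Ener 0) ^ ((1:ℝ)/2) := h1
      _ = Real.sqrt t * (Ener 0) ^ ((1:ℝ)/2) := by
          rw [Real.mul_rpow htnn (hEnonneg 0), Real.sqrt_eq_rpow]
end

section
/- Let d ≥ 1, let Ω ⊆ ℝ^d be open, let a be a continuously differentiable field of symmetric linear maps on ℝ^d, and let T > 0. Let w : ℝ × ℝ^d → ℝ be smooth and satisfy the parabolic equation ∂_t w(t,x) = div(a∇w(t,·))(x) for all t ∈ [0,T] and x ∈ Ω, with initial data g = w(0,·). Define u_T(x) = ∫_0^T w(t,x) dt. Then u_T is twice continuously differentiable on Ω and satisfies the regularized elliptic equation −div(a∇u_T)(x) = g(x) − w(T,x) for every x ∈ Ω. -/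
open MeasureTheory Real
open scoped RealInnerProductSpace
set_option synthInstance.maxHeartbeats 1000000
set_option maxHeartbeats 1000000

section AuxParam

variable {E F : Type*} [NormedAddCommGroup E] [NormedSpace ℝ E]
  [NormedAddCommGroup F] [NormedSpace ℝ F]

lemma aux_partial_hasFDerivAt {V : ℝ × E → F} (hV : ContDiff ℝ 1 V) (t : ℝ) (x : E) :
    HasFDerivAt (fun y => V (t, y))
      ((fderiv ℝ V (t, x)).comp (ContinuousLinearMap.inr ℝ ℝ E)) x :=
  ((hV.differentiable one_ne_zero (t, x)).hasFDerivAt).comp x (hasFDerivAt_prodMk_right t x)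

lemma aux_partial_fderiv_continuous {V : ℝ × E → F} (hV : ContDiff ℝ 1 V) :
    Continuous fun p : ℝ × E =>
      (fderiv ℝ V p).comp (ContinuousLinearMap.inr ℝ ℝ E) :=
  (hV.continuous_fderiv one_ne_zero).clm_comp continuous_const

lemma aux_hasFDerivAt_param_integral [ProperSpace E] [CompleteSpace F] {T : ℝ}
    {φ : ℝ → E → F} {φ' : ℝ → E → E →L[ℝ] F}
    (hφ : Continuous fun p : ℝ × E => φ p.1 p.2)
    (hφ' : Continuous fun p : ℝ × E => φ' p.1 p.2)
    (hd : ∀ t x, HasFDerivAt (φ t) (φ' t x) x) (x₀ : E) :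
    HasFDerivAt (fun x => ∫ t in (0:ℝ)..T, φ t x) (∫ t in (0:ℝ)..T, φ' t x₀) x₀ := by
  obtain ⟨C, hC⟩ := (((isCompact_uIcc (a := (0:ℝ)) (b := T)).prod
      (isCompact_closedBall x₀ 1))).exists_bound_of_continuousOn hφ'.continuousOn
  have cont_x : ∀ x : E, Continuous fun t => φ t x := fun x =>
    hφ.comp (continuous_id.prodMk continuous_const)
  have cont_x' : Continuous fun t => φ' t x₀ :=
    hφ'.comp (continuous_id.prodMk continuous_const)
  exact intervalIntegral.hasFDerivAt_integral_of_dominated_of_fderiv_le (Metric.ball_mem_nhds x₀ one_pos)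
    (Filter.Eventually.of_forall fun x => (cont_x x).aestronglyMeasurable)
    ((cont_x x₀).intervalIntegrable _ _)
    cont_x'.aestronglyMeasurable
    (MeasureTheory.ae_of_all _ fun t ht x hx =>
      hC (t, x) ⟨Set.uIoc_subset_uIcc ht, Metric.ball_subset_closedBall hx⟩)
    intervalIntegrable_const
    (MeasureTheory.ae_of_all _ fun t _ x _ => hd t x)

lemma aux_continuous_param_integral [CompleteSpace F] {T : ℝ} {φ : ℝ → E → F}
    (hφ : Continuous fun p : ℝ × E => φ p.1 p.2) :
    Continuous fun x : E => ∫ t in (0:ℝ)..T, φ t x :=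
  intervalIntegral.continuous_parametric_intervalIntegral_of_continuous'
    (f := fun x t => φ t x) (hφ.comp continuous_swap) 0 T

end AuxParam

section AuxDefs

variable {d : ℕ}

/-- The spatial Fréchet derivative of a time-dependent function. -/
noncomputable def pFd (w : ℝ → EuclideanSpace ℝ (Fin d) → ℝ)
    (p : ℝ × EuclideanSpace ℝ (Fin d)) : EuclideanSpace ℝ (Fin d) →L[ℝ] ℝ :=
  (fderiv ℝ (fun q : ℝ × EuclideanSpace ℝ (Fin d) => w q.1 q.2) p).comp
    (ContinuousLinearMap.inr ℝ ℝ (EuclideanSpace ℝ (Fin d)))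

/-- The spatial gradient of a time-dependent function, written in coordinates. -/
noncomputable def grd (w : ℝ → EuclideanSpace ℝ (Fin d) → ℝ)
    (p : ℝ × EuclideanSpace ℝ (Fin d)) : EuclideanSpace ℝ (Fin d) :=
  ∑ j : Fin d, (pFd w p (EuclideanSpace.single j 1)) • (EuclideanSpace.single j 1)

/-- The `j`-th coordinate of the flux field. -/
noncomputable def fluxC
    (a : EuclideanSpace ℝ (Fin d) →
      EuclideanSpace ℝ (Fin d) →L[ℝ] EuclideanSpace ℝ (Fin d))
    (w : ℝ → EuclideanSpace ℝ (Fin d) → ℝ) (j : Fin d)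
    (p : ℝ × EuclideanSpace ℝ (Fin d)) : ℝ :=
  (a p.2 (grd w p)) j

/-- The spatial derivative of the flux coordinate. -/
noncomputable def rFlux
    (a : EuclideanSpace ℝ (Fin d) →
      EuclideanSpace ℝ (Fin d) →L[ℝ] EuclideanSpace ℝ (Fin d))
    (w : ℝ → EuclideanSpace ℝ (Fin d) → ℝ) (j : Fin d)
    (p : ℝ × EuclideanSpace ℝ (Fin d)) : EuclideanSpace ℝ (Fin d) →L[ℝ] ℝ :=
  (fderiv ℝ (fluxC a w j) p).comp (ContinuousLinearMap.inr ℝ ℝ (EuclideanSpace ℝ (Fin d)))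

lemma gradient_coord (f : EuclideanSpace ℝ (Fin d) → ℝ) (y : EuclideanSpace ℝ (Fin d))
    (j : Fin d) : gradient f y j = fderiv ℝ f y (EuclideanSpace.single j 1) := by
  have h1 : ⟪gradient f y, EuclideanSpace.single j (1:ℝ)⟫
      = fderiv ℝ f y (EuclideanSpace.single j 1) :=
    InnerProductSpace.toDual_symm_apply
  rw [EuclideanSpace.inner_single_right] at h1
  simpa using h1

lemma grd_coord (w : ℝ → EuclideanSpace ℝ (Fin d) → ℝ) (p : ℝ × EuclideanSpace ℝ (Fin d))
    (j : Fin d) : grd w p j = pFd w p (EuclideanSpace.single j 1) := by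
  have h := map_sum (EuclideanSpace.proj (𝕜 := ℝ) j)
    (fun i : Fin d => (pFd w p (EuclideanSpace.single i 1)) • EuclideanSpace.single i (1:ℝ))
    Finset.univ
  simp only [_root_.map_smul, PiLp.proj_apply, EuclideanSpace.single_apply, smul_eq_mul,
    mul_ite, mul_one, mul_zero, Finset.sum_ite_eq', Finset.mem_univ, if_true] at h
  simpa [grd] using h

end AuxDefs

/-- The time average `u_T(x) = ∫_0^T w(t,x) dt` of a solution of the parabolic problem
solves the regularized elliptic equation `−div(a∇u_T) = g − w(T,·)` on `Ω`. -/
theorem time_average_solves_regularized_elliptic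
    (d : ℕ) (hd : 1 ≤ d)
    (Ω : Set (EuclideanSpace ℝ (Fin d))) (hΩ : IsOpen Ω)
    (a : EuclideanSpace ℝ (Fin d) →
      EuclideanSpace ℝ (Fin d) →L[ℝ] EuclideanSpace ℝ (Fin d))
    (ha_smooth : ContDiff ℝ 1 a)
    (ha_symm : ∀ x ζ ξ, ⟪a x ζ, ξ⟫ = ⟪ζ, a x ξ⟫)
    (T : ℝ) (hT : 0 < T)
    (w : ℝ → EuclideanSpace ℝ (Fin d) → ℝ)
    (hw_smooth : ContDiff ℝ (⊤ : ℕ∞) (fun p : ℝ × EuclideanSpace ℝ (Fin d) => w p.1 p.2))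
    (hpde : ∀ t ∈ Set.Icc (0 : ℝ) T, ∀ x ∈ Ω,
      deriv (fun s => w s x) t = vecDiv (fun y => a y (gradient (w t) y)) x)
    (uT : EuclideanSpace ℝ (Fin d) → ℝ)
    (huT : ∀ x, uT x = ∫ t in (0 : ℝ)..T, w t x) :
    ContDiffOn ℝ 2 uT Ω ∧
      ∀ x ∈ Ω, -vecDiv (fun y => a y (gradient uT y)) x = w 0 x - w T x := by
  have hW1 : ContDiff ℝ 1 (fun p : ℝ × EuclideanSpace ℝ (Fin d) => w p.1 p.2) :=
    hw_smooth.of_le (by simp)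
  -- smoothness of the spatial Fréchet derivative
  have hpFd1 : ContDiff ℝ 1 (pFd w) :=
    (hw_smooth.fderiv_right (WithTop.coe_le_coe.mpr le_top)).clm_comp contDiff_const
  have hpFdc : Continuous (pFd w) := hpFd1.continuous
  have hfd : ∀ t (x : EuclideanSpace ℝ (Fin d)), HasFDerivAt (w t) (pFd w (t, x)) x :=
    fun t x => aux_partial_hasFDerivAt hW1 t x
  have hfderiv_w : ∀ t (x : EuclideanSpace ℝ (Fin d)), fderiv ℝ (w t) x = pFd w (t, x) :=
    fun t x => (hfd t x).fderiv
  -- the coordinate gradient field agrees with `gradient`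
  have hgrd1 : ContDiff ℝ 1 (grd w) := by
    apply ContDiff.sum (fun j _ => ?_)
    exact (hpFd1.clm_apply contDiff_const).smul contDiff_const
  have hgrad_w : ∀ t y, gradient (w t) y = grd w (t, y) := by
    intro t y
    ext j
    rw [gradient_coord, grd_coord, hfderiv_w]
  -- derivative of `uT`
  have huT_eq : uT = fun x => ∫ t in (0:ℝ)..T, w t x := funext huT
  have hU1 : ∀ x₀, HasFDerivAt uT (∫ t in (0:ℝ)..T, pFd w (t, x₀)) x₀ := by
    intro x₀
    rw [huT_eq]
    exact aux_hasFDerivAt_param_integral (φ := w) (φ' := fun t x => pFd w (t, x))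
      hW1.continuous hpFdc hfd x₀
  have hfderiv_uT : ∀ x, fderiv ℝ uT x = ∫ t in (0:ℝ)..T, pFd w (t, x) :=
    fun x => (hU1 x).fderiv
  -- second derivative of `uT`
  have hU2 : ∀ x₀, HasFDerivAt (fun x => ∫ t in (0:ℝ)..T, pFd w (t, x))
      (∫ t in (0:ℝ)..T, (fderiv ℝ (pFd w) (t, x₀)).comp
        (ContinuousLinearMap.inr ℝ ℝ (EuclideanSpace ℝ (Fin d)))) x₀ :=
    fun x₀ => aux_hasFDerivAt_param_integral (φ := fun t x => pFd w (t, x))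
      (φ' := fun t x => (fderiv ℝ (pFd w) (t, x)).comp
        (ContinuousLinearMap.inr ℝ ℝ (EuclideanSpace ℝ (Fin d))))
      hpFdc (aux_partial_fderiv_continuous hpFd1)
      (fun t x => aux_partial_hasFDerivAt hpFd1 t x) x₀
  have hC2 : ContDiff ℝ 2 uT := by
    rw [show (2 : WithTop ℕ∞) = 1 + 1 by norm_num, contDiff_succ_iff_fderiv]
    refine ⟨fun x => (hU1 x).differentiableAt, by simp, ?_⟩
    rw [funext hfderiv_uT, contDiff_one_iff_fderiv]
    refine ⟨fun x => (hU2 x).differentiableAt, ?_⟩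
    rw [funext (fun x => (hU2 x).fderiv)]
    exact aux_continuous_param_integral
      (φ := fun t x => (fderiv ℝ (pFd w) (t, x)).comp
        (ContinuousLinearMap.inr ℝ ℝ (EuclideanSpace ℝ (Fin d))))
      (aux_partial_fderiv_continuous hpFd1)
  refine ⟨hC2.contDiffOn, fun x hx => ?_⟩
  -- integrability helpers
  have hint_pFd : ∀ y, IntervalIntegrable (fun t => pFd w (t, y)) volume (0:ℝ) T :=
    fun y => (hpFdc.comp (continuous_id.prodMk continuous_const)).intervalIntegrable _ _
  have hint_grd : ∀ y, IntervalIntegrable (fun t => grd w (t, y)) volume (0:ℝ) T :=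
    fun y => (hgrd1.continuous.comp (continuous_id.prodMk continuous_const)).intervalIntegrable _ _
  have hint_flux : ∀ y, IntervalIntegrable (fun t => a y (grd w (t, y))) volume (0:ℝ) T :=
    fun y => ((a y).continuous.comp
      (hgrd1.continuous.comp (continuous_id.prodMk continuous_const))).intervalIntegrable _ _
  -- gradient of uT as an integral
  have hgrad_uT : ∀ y, gradient uT y = ∫ t in (0:ℝ)..T, grd w (t, y) := by
    intro y
    ext j
    have h1 : (∫ t in (0:ℝ)..T, grd w (t, y)) j
        = ∫ t in (0:ℝ)..T, grd w (t, y) j :=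
      ((EuclideanSpace.proj (𝕜 := ℝ) j).intervalIntegral_comp_comm (hint_grd y)).symm
    rw [gradient_coord, hfderiv_uT, ContinuousLinearMap.intervalIntegral_apply (hint_pFd y), h1]
    exact intervalIntegral.integral_congr fun t _ => (grd_coord w (t, y) j).symm
  -- smoothness of the flux coordinates
  have hflux1 : ∀ j : Fin d, ContDiff ℝ 1 (fluxC a w j) := fun j =>
    (EuclideanSpace.proj (𝕜 := ℝ) j).contDiff.comp
      ((ha_smooth.comp contDiff_snd).clm_apply hgrd1)
  have hrcont : ∀ j : Fin d, Continuous (rFlux a w j) :=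
    fun j => aux_partial_fderiv_continuous (hflux1 j)
  have hint_r : ∀ (j : Fin d) (x₀ : EuclideanSpace ℝ (Fin d)),
      IntervalIntegrable (fun t => rFlux a w j (t, x₀)) volume (0:ℝ) T :=
    fun j x₀ => ((hrcont j).comp (continuous_id.prodMk continuous_const)).intervalIntegrable _ _
  -- the flux coordinates of uT as integrals
  have hflux_coord : ∀ (j : Fin d) y, (a y (gradient uT y)) j
      = ∫ t in (0:ℝ)..T, fluxC a w j (t, y) := by
    intro j y
    rw [hgrad_uT y, ← ContinuousLinearMap.intervalIntegral_comp_comm (a y) (hint_grd y)]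
    exact ((EuclideanSpace.proj (𝕜 := ℝ) j).intervalIntegral_comp_comm (hint_flux y)).symm
  have hU3 : ∀ (j : Fin d) (x₀ : EuclideanSpace ℝ (Fin d)),
      HasFDerivAt (fun y => ∫ t in (0:ℝ)..T, fluxC a w j (t, y))
        (∫ t in (0:ℝ)..T, rFlux a w j (t, x₀)) x₀ :=
    fun j x₀ => aux_hasFDerivAt_param_integral (φ := fun t y => fluxC a w j (t, y))
      (φ' := fun t y => rFlux a w j (t, y)) (hflux1 j).continuous (hrcont j)
      (fun t y => aux_partial_hasFDerivAt (hflux1 j) t y) x₀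
  -- the divergence computation
  have e1 : ∀ j : Fin d,
      fderiv ℝ (fun y => (a y (gradient uT y)) j) x (EuclideanSpace.single j 1)
        = ∫ t in (0:ℝ)..T, rFlux a w j (t, x) (EuclideanSpace.single j 1) := by
    intro j
    rw [funext (hflux_coord j), (hU3 j x).fderiv,
      ContinuousLinearMap.intervalIntegral_apply (hint_r j x)]
  have hdw : ContDiff ℝ 1 (fun s => w s x) := hW1.comp (contDiff_id.prodMk contDiff_const)
  have hdiv : vecDiv (fun y => a y (gradient uT y)) x = w T x - w 0 x := by
    calc vecDiv (fun y => a y (gradient uT y)) x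
        = ∑ j : Fin d, ∫ t in (0:ℝ)..T, rFlux a w j (t, x) (EuclideanSpace.single j 1) :=
          Finset.sum_congr rfl fun j _ => e1 j
      _ = ∫ t in (0:ℝ)..T, ∑ j : Fin d, rFlux a w j (t, x) (EuclideanSpace.single j 1) :=
          (intervalIntegral.integral_finset_sum (fun j _ =>
            ((hrcont j).comp (continuous_id.prodMk continuous_const)).clm_apply
              continuous_const |>.intervalIntegrable _ _)).symm
      _ = ∫ t in (0:ℝ)..T, deriv (fun s => w s x) t := by
          apply intervalIntegral.integral_congr
          intro t ht
          rw [Set.uIcc_of_le hT.le] at ht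
          rw [hpde t ht x hx]
          simp only [vecDiv]
          refine Finset.sum_congr rfl fun j _ => ?_
          have h3 := (aux_partial_hasFDerivAt (hflux1 j) t x).fderiv
          have hfun2 : (fun y => fluxC a w j (t, y))
              = fun y => (a y (gradient (w t) y)) j := by
            funext y
            rw [show fluxC a w j (t, y) = (a y (grd w (t, y))) j from rfl, ← hgrad_w t y]
          rw [rFlux, ← h3, hfun2]
      _ = w T x - w 0 x :=
          intervalIntegral.integral_deriv_eq_sub (fun t _ => hdw.differentiable one_ne_zero t)
            ((hdw.continuous_deriv le_rfl).intervalIntegrable _ _)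
  rw [hdiv]
  ring
end

section
/- Let d ≥ 1 and let Ω ⊆ ℝ^d be open. Let a be a continuously differentiable field of symmetric linear maps on ℝ^d, and let 0 < α ≤ β be constants with α‖ζ‖² ≤ ⟨a(x)ζ, ζ⟩ ≤ β‖ζ‖² for all x, ζ ∈ ℝ^d. Let u : ℝ^d → ℝ be twice continuously differentiable with div(a∇u)(x) = 0 for every x ∈ Ω, and let η : ℝ^d → ℝ be smooth with compact support contained in Ω. Then the Caccioppoli-type inequality ∫_{ℝ^d} ‖∇(ηu)(x)‖² dx ≤ (β/α) · ∫_{ℝ^d} u(x)² ‖∇η(x)‖² dx holds. -/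
open MeasureTheory Real
open scoped RealInnerProductSpace

section Helpers

open Function

variable {d : ℕ}

local notation "E" => EuclideanSpace ℝ (Fin d)

lemma pi_int_div_eq_zero' {n : ℕ} (f : (Fin (n+1) → ℝ) → (Fin (n+1) → ℝ))
    (hf : ContDiff ℝ 1 f) (hc : HasCompactSupport f) :
    ∫ x, ∑ i, fderiv ℝ (fun y => f y i) x (Pi.single i 1) = 0 := by
  obtain ⟨R, hR0, hR⟩ := hc.isCompact.isBounded.subset_ball_lt 0 0
  set a : Fin (n+1) → ℝ := fun _ => -R with ha
  set b : Fin (n+1) → ℝ := fun _ => R with hb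
  have hle : a ≤ b := fun i => by simp only [ha, hb]; linarith
  have hball : Metric.ball (0 : Fin (n+1) → ℝ) R ⊆ Set.Icc a b := by
    intro x hx
    simp only [Metric.mem_ball, dist_zero_right] at hx
    constructor <;> intro i <;>
      have h1 : |x i| ≤ R := (Real.norm_eq_abs (x i) ▸ norm_le_pi_norm x i).trans hx.le
    · exact (abs_le.1 h1).1
    · exact (abs_le.1 h1).2
  have hnot : ∀ x : Fin (n+1) → ℝ, x ∉ Set.Icc a b → f x = 0 := by
    intro x hx
    have : x ∉ tsupport f := fun h => hx (hball (hR h))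
    exact image_eq_zero_of_notMem_tsupport this
  have hfi : ∀ i, ContDiff ℝ 1 (fun y => f y i) := fun i =>
    (ContinuousLinearMap.proj i : (Fin (n+1) → ℝ) →L[ℝ] ℝ).contDiff.comp hf
  have hdiv0 : ∀ x : Fin (n+1) → ℝ, x ∉ Set.Icc a b →
      (∑ i, fderiv ℝ (fun y => f y i) x (Pi.single i 1)) = 0 := by
    intro x hx
    have hxt : x ∉ tsupport f := fun h => hx (hball (hR h))
    apply Finset.sum_eq_zero
    intro i _
    have : x ∉ tsupport (fun y => f y i) := by
      intro h
      exact hxt (closure_mono (support_subset_iff.2 fun y hy => by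
        intro h0; exact hy (by simp [h0])) h)
    have h0 : fderiv ℝ (fun y => f y i) x = 0 :=
      Function.notMem_support.mp (fun hmem => this (support_fderiv_subset ℝ hmem))
    simp [h0]
  have hcont : Continuous fun x => ∑ i, fderiv ℝ (fun y => f y i) x (Pi.single i 1) :=
    continuous_finset_sum _ fun i _ =>
      ((hfi i).continuous_fderiv one_ne_zero).clm_apply continuous_const
  have key := integral_divergence_of_hasFDerivAt_off_countable' a b hle
      (fun i y => f y i) (fun i y => fderiv ℝ (fun z => f z i) y) ∅ Set.countable_empty
      (fun i => (hfi i).continuous.continuousOn)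
      (fun x _ i => ((hfi i).differentiable one_ne_zero x).hasFDerivAt)
      (hcont.continuousOn.integrableOn_compact isCompact_Icc)
  rw [setIntegral_eq_integral_of_forall_compl_eq_zero hdiv0] at key
  rw [key]
  apply Finset.sum_eq_zero
  intro i _
  have hface : ∀ (c : ℝ), |c| = R → ∀ x : Fin n → ℝ, f (i.insertNth c x : Fin (n+1) → ℝ) i = 0 := by
    intro c hcR x
    set y : Fin (n+1) → ℝ := i.insertNth c x with hy_def
    have hyi : y i = c := by simp [hy_def]
    have hy : y ∉ Metric.ball (0 : Fin (n+1) → ℝ) R := by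
      simp only [Metric.mem_ball, dist_zero_right]
      intro hlt
      have := (norm_le_pi_norm y i).trans_lt hlt
      rw [hyi, Real.norm_eq_abs, hcR] at this
      exact lt_irrefl _ this
    have : f y = 0 :=
      image_eq_zero_of_notMem_tsupport (fun h => hy (hR h))
    simp [this]
  have h1 : ∀ x : Fin n → ℝ, f (i.insertNth (b i) x) i = 0 :=
    hface R (abs_of_pos hR0) 
  have h2 : ∀ x : Fin n → ℝ, f (i.insertNth (a i) x) i = 0 :=
    hface (-R) (abs_of_neg (neg_neg_iff_pos.mpr hR0) ▸ (neg_neg R))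
  simp only [h1, h2, integral_zero, sub_zero]

lemma int_vecDiv_eq_zero' {d : ℕ} (hd : 1 ≤ d)
    (G : EuclideanSpace ℝ (Fin d) → EuclideanSpace ℝ (Fin d))
    (hG : ContDiff ℝ 1 G) (hc : HasCompactSupport G) :
    ∫ x, vecDiv G x = 0 := by
  obtain ⟨n, rfl⟩ : ∃ n, d = n + 1 := ⟨d - 1, (Nat.succ_pred_eq_of_pos hd).symm⟩
  set ψ := EuclideanSpace.equiv (Fin (n+1)) ℝ with hψ
  set f : (Fin (n+1) → ℝ) → (Fin (n+1) → ℝ) := fun x => ψ (G (ψ.symm x)) with hf_def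
  have hf : ContDiff ℝ 1 f :=
    (ψ : EuclideanSpace ℝ (Fin (n+1)) →L[ℝ] (Fin (n+1) → ℝ)).contDiff.comp
      (hG.comp (ψ.symm : (Fin (n+1) → ℝ) →L[ℝ] EuclideanSpace ℝ (Fin (n+1))).contDiff)
  have hcf : HasCompactSupport f := by
    have h1 : HasCompactSupport (fun x => G (ψ.symm x)) :=
      hc.comp_homeomorph ψ.symm.toHomeomorph
    exact h1.comp_left (g := ψ) (map_zero _)
  have hGi : ∀ i, ContDiff ℝ 1 (fun z => G z i) := fun i =>
    (EuclideanSpace.proj (𝕜 := ℝ) i).contDiff.comp hG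
  have hkey : ∀ x, vecDiv G (ψ.symm x)
      = ∑ i, fderiv ℝ (fun y => f y i) x (Pi.single i 1) := by
    intro x
    unfold vecDiv
    refine Finset.sum_congr rfl fun i _ => ?_
    have hcomp : (fun y => f y i) = (fun z => G z i) ∘ (ψ.symm : (Fin (n+1) → ℝ) → _) := rfl
    rw [hcomp, ContinuousLinearEquiv.comp_right_fderiv]
    rfl
  have hmp : MeasurePreserving (⇑(MeasurableEquiv.toLp 2 (Fin (n+1) → ℝ)))
      volume volume := (EuclideanSpace.volume_preserving_symm_measurableEquiv_toLp (Fin (n+1))).symm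
  have := hmp.integral_comp (MeasurableEquiv.toLp 2 (Fin (n+1) → ℝ)).measurableEmbedding
    (fun x => vecDiv G x)
  rw [← this]
  have hco : ∀ y, vecDiv G ((MeasurableEquiv.toLp 2 (Fin (n+1) → ℝ)) y)
      = vecDiv G (ψ.symm y) := fun y => rfl
  simp_rw [hco, hkey]
  exact pi_int_div_eq_zero' f hf hcf

lemma gradient_def' (f : E → ℝ) (x : E) :
    gradient f x = (InnerProductSpace.toDual ℝ E).symm (fderiv ℝ f x) := rfl

lemma inner_gradient' (f : E → ℝ) (x v : E) : ⟪gradient f x, v⟫ = fderiv ℝ f x v :=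
  InnerProductSpace.toDual_symm_apply

lemma gradient_mul' {f g : E → ℝ} {x : E} (hf : DifferentiableAt ℝ f x)
    (hg : DifferentiableAt ℝ g x) :
    gradient (fun y => f y * g y) x = f x • gradient g x + g x • gradient f x := by
  simp only [gradient_def', fderiv_fun_mul hf hg, map_add, map_smulₛₗ, starRingEnd_apply,
    star_trivial]

lemma sum_smul_single' (v : E) : ∑ j : Fin d, v j • EuclideanSpace.single j (1:ℝ) = v := by
  have := (EuclideanSpace.basisFun (Fin d) ℝ).sum_repr v
  simpa using this

lemma gradient_repr (f : E → ℝ) (x : E) :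
    gradient f x
      = ∑ j, (fderiv ℝ f x (EuclideanSpace.single j 1)) • EuclideanSpace.single j (1:ℝ) := by
  conv_lhs => rw [← sum_smul_single' (gradient f x)]
  refine Finset.sum_congr rfl fun j _ => ?_
  congr 1
  rw [← inner_gradient' f x (EuclideanSpace.single j 1), EuclideanSpace.inner_single_right]
  simp [real_inner_comm]

lemma contDiff_gradient' {f : E → ℝ} {m n : WithTop ℕ∞} (hf : ContDiff ℝ n f) (h : m + 1 ≤ n) :
    ContDiff ℝ m (gradient f) := by
  have : (gradient f)
      = fun x => ∑ j, (fderiv ℝ f x (EuclideanSpace.single j 1)) • EuclideanSpace.single j (1:ℝ) :=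
    funext fun x => gradient_repr f x
  rw [this]
  exact ContDiff.sum fun j _ =>
    ((hf.fderiv_right h).clm_apply contDiff_const).smul contDiff_const

lemma continuous_gradient' {f : E → ℝ} {n : WithTop ℕ∞} (hf : ContDiff ℝ n f) (h : 1 ≤ n) :
    Continuous (gradient f) := by
  have : (gradient f)
      = fun x => ∑ j, (fderiv ℝ f x (EuclideanSpace.single j 1)) • EuclideanSpace.single j (1:ℝ) :=
    funext fun x => gradient_repr f x
  rw [this]
  exact continuous_finset_sum _ fun j _ =>
    ((hf.continuous_fderiv (zero_lt_one.trans_le h).ne').clm_apply continuous_const).smul continuous_const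

lemma hasCompactSupport_gradient' {f : E → ℝ} (h : HasCompactSupport f) :
    HasCompactSupport (gradient f) :=
  (h.fderiv ℝ).comp_left (g := (InnerProductSpace.toDual ℝ E).symm) (map_zero _)

lemma gradient_eq_zero_of_nmem' {f : E → ℝ} {x : E} (h : x ∉ tsupport f) :
    gradient f x = 0 := by
  have : fderiv ℝ f x = 0 :=
    Function.notMem_support.mp (fun hmem => h (support_fderiv_subset ℝ hmem))
  rw [gradient_def', this, map_zero]

lemma vecDiv_smul (φ : E → ℝ) (F : E → E) (x : E) (hφ : DifferentiableAt ℝ φ x)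
    (hF : ∀ j, DifferentiableAt ℝ (fun y => F y j) x) :
    vecDiv (fun y => φ y • F y) x = fderiv ℝ φ x (F x) + φ x * vecDiv F x := by
  unfold vecDiv
  have hco : ∀ j : Fin d, (fun y => (φ y • F y) j) = fun y => φ y * F y j := fun j => rfl
  have step : ∀ j : Fin d, fderiv ℝ (fun y => (φ y • F y) j) x (EuclideanSpace.single j 1)
      = φ x * fderiv ℝ (fun y => F y j) x (EuclideanSpace.single j 1)
        + F x j * fderiv ℝ φ x (EuclideanSpace.single j 1) := by
    intro j
    rw [hco j, fderiv_fun_mul hφ (hF j)]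
    simp [smul_eq_mul]
  rw [Finset.sum_congr rfl fun j _ => step j, Finset.sum_add_distrib, ← Finset.mul_sum]
  have : ∑ j : Fin d, F x j * fderiv ℝ φ x (EuclideanSpace.single j 1)
      = fderiv ℝ φ x (F x) := by
    conv_rhs => rw [← sum_smul_single' (F x)]
    rw [map_sum]
    exact Finset.sum_congr rfl fun j _ => by rw [_root_.map_smul]; rfl
  rw [this]; ring

end Helpers

/-- Caccioppoli-type inequality: if `div(a∇u) = 0` on the open set `Ω` and `η` is a
smooth cut-off compactly supported in `Ω`, then
`∫ ‖∇(ηu)‖² ≤ (β/α) ∫ u² ‖∇η‖²`. -/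
theorem caccioppoli_inequality
    (d : ℕ) (hd : 1 ≤ d)
    (Ω : Set (EuclideanSpace ℝ (Fin d))) (hΩ : IsOpen Ω)
    (a : EuclideanSpace ℝ (Fin d) →
      EuclideanSpace ℝ (Fin d) →L[ℝ] EuclideanSpace ℝ (Fin d))
    (ha_smooth : ContDiff ℝ 1 a)
    (ha_symm : ∀ x ζ ξ, ⟪a x ζ, ξ⟫ = ⟪ζ, a x ξ⟫)
    (α β : ℝ) (hα : 0 < α) (hαβ : α ≤ β)
    (ha_coercive : ∀ x ζ, α * ‖ζ‖ ^ 2 ≤ ⟪a x ζ, ζ⟫)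
    (ha_bounded : ∀ x ζ, ⟪a x ζ, ζ⟫ ≤ β * ‖ζ‖ ^ 2)
    (u : EuclideanSpace ℝ (Fin d) → ℝ) (hu : ContDiff ℝ 2 u)
    (hu_harm : ∀ x ∈ Ω, vecDiv (fun y => a y (gradient u y)) x = 0)
    (η : EuclideanSpace ℝ (Fin d) → ℝ) (hη : ContDiff ℝ (⊤ : ℕ∞) η)
    (hη_cpt : HasCompactSupport η) (hη_supp : tsupport η ⊆ Ω) :
    ∫ x, ‖gradient (fun y => η y * u y) x‖ ^ 2 ≤
      (β / α) * ∫ x, (u x) ^ 2 * ‖gradient η x‖ ^ 2 := by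
  have hu1 : ContDiff ℝ 1 u := hu.of_le (by norm_num)
  have hη1 : ContDiff ℝ 1 η := hη.of_le (by simp)
  have hη2 : ContDiff ℝ 2 η := hη.of_le (by exact WithTop.coe_le_coe.mpr le_top)
  set w : EuclideanSpace ℝ (Fin d) → ℝ := fun y => η y * u y with hw_def
  have hw : ContDiff ℝ 1 w := hη1.mul hu1
  set φ : EuclideanSpace ℝ (Fin d) → ℝ := fun y => η y * w y with hφ_def
  have hφ : ContDiff ℝ 1 φ := hη1.mul hw
  set F : EuclideanSpace ℝ (Fin d) → EuclideanSpace ℝ (Fin d) :=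
    fun y => a y (gradient u y) with hF_def
  have hgradu : ContDiff ℝ 1 (gradient u) := contDiff_gradient' hu (by norm_num)
  have hF : ContDiff ℝ 1 F := ha_smooth.clm_apply hgradu
  set G : EuclideanSpace ℝ (Fin d) → EuclideanSpace ℝ (Fin d) :=
    fun y => φ y • F y with hG_def
  have hG : ContDiff ℝ 1 G := hφ.smul hF
  -- compact supports
  have hw_cpt : HasCompactSupport w := hη_cpt.mul_right
  have hφ_cpt : HasCompactSupport φ := hη_cpt.mul_right
  have hG_cpt : HasCompactSupport G := hφ_cpt.smul_right
  have hg_cpt : HasCompactSupport (gradient w) := hasCompactSupport_gradient' hw_cpt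
  have hq_cpt : HasCompactSupport (gradient η) := hasCompactSupport_gradient' hη_cpt
  -- continuity
  have hg_cont : Continuous (gradient w) := continuous_gradient' hw le_rfl
  have hq_cont : Continuous (gradient η) := continuous_gradient' hη1 le_rfl
  -- the divergence theorem
  have hint : ∫ x, vecDiv G x = 0 := int_vecDiv_eq_zero' hd G hG hG_cpt
  -- supports of w, φ inside tsupport η
  have hts_w : tsupport w ⊆ tsupport η :=
    closure_mono (Function.support_mul_subset_left _ _)
  have hts_φ : tsupport φ ⊆ tsupport η :=
    closure_mono (Function.support_mul_subset_left _ _)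
  -- pointwise identity
  have key : ∀ x, vecDiv G x
      = ⟪a x (gradient w x), gradient w x⟫
        - (u x) ^ 2 * ⟪a x (gradient η x), gradient η x⟫ := by
    intro x
    have hprod : vecDiv G x = fderiv ℝ φ x (F x) + φ x * vecDiv F x := by
      refine vecDiv_smul φ F x ((hφ.differentiable one_ne_zero) x) (fun j => ?_)
      exact ((EuclideanSpace.proj (𝕜 := ℝ) j).differentiable.comp
        (hF.differentiable one_ne_zero)) x
    by_cases hx : x ∈ tsupport η
    · -- x ∈ Ω
      have hxΩ : x ∈ Ω := hη_supp hx
      have hdiv0 : vecDiv F x = 0 := hu_harm x hxΩ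
      rw [hprod, hdiv0, mul_zero, add_zero]
      have hfd : fderiv ℝ φ x (F x) = ⟪gradient φ x, F x⟫ := (inner_gradient' φ x (F x)).symm
      have hηd : DifferentiableAt ℝ η x := (hη1.differentiable one_ne_zero) x
      have hud : DifferentiableAt ℝ u x := (hu1.differentiable one_ne_zero) x
      have hwd : DifferentiableAt ℝ w x := (hw.differentiable one_ne_zero) x
      have hgw : gradient w x = η x • gradient u x + u x • gradient η x := gradient_mul' hηd hud
      have hgφ : gradient φ x = η x • gradient w x + w x • gradient η x := gradient_mul' hηd hwd
      set P := gradient u x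
      set Q := gradient η x
      set A := a x
      have e1 : ⟪Q, A P⟫ = ⟪A P, Q⟫ := real_inner_comm _ _
      have e2 : ⟪P, A P⟫ = ⟪A P, P⟫ := real_inner_comm _ _
      have e3 : ⟪A Q, P⟫ = ⟪A P, Q⟫ := by rw [ha_symm x Q P, real_inner_comm]
      rw [hfd, hgφ, hgw, hw_def]
      rw [show F x = A P from rfl]
      simp only [map_add, _root_.map_smul, inner_add_left, inner_add_right,
        real_inner_smul_left, real_inner_smul_right]
      simp only [e1, e2, e3]
      ring
    · -- x outside the support of η
      have hφx : φ x = 0 := by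
        have : η x = 0 := image_eq_zero_of_notMem_tsupport hx
        simp [hφ_def, this]
      have hfdφ : fderiv ℝ φ x = 0 :=
        Function.notMem_support.mp fun hmem =>
          hx (hts_φ (support_fderiv_subset ℝ hmem))
      have hgw0 : gradient w x = 0 := gradient_eq_zero_of_nmem' fun h => hx (hts_w h)
      have hgη0 : gradient η x = 0 := gradient_eq_zero_of_nmem' hx
      rw [hprod, hφx, hfdφ, hgw0, hgη0]
      simp
  -- integrability
  have iB : Integrable (fun x => ⟪a x (gradient w x), gradient w x⟫) := by
    apply Continuous.integrable_of_hasCompactSupport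
    · exact (ha_smooth.continuous.clm_apply hg_cont).inner hg_cont
    · refine hg_cpt.mono' (fun x hx => ?_)
      by_contra h
      have : gradient w x = 0 := Function.notMem_support.mp fun hmem => h (subset_closure hmem)
      simp [this] at hx
  have iC : Integrable (fun x => (u x) ^ 2 * ⟪a x (gradient η x), gradient η x⟫) := by
    apply Continuous.integrable_of_hasCompactSupport
    · exact ((hu1.continuous.pow 2)).mul ((ha_smooth.continuous.clm_apply hq_cont).inner hq_cont)
    · refine hq_cpt.mono' (fun x hx => ?_)
      by_contra h
      have : gradient η x = 0 := Function.notMem_support.mp fun hmem => h (subset_closure hmem)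
      simp [this] at hx
  have inorm : Integrable (fun x => ‖gradient w x‖ ^ 2) := by
    apply Continuous.integrable_of_hasCompactSupport
    · exact (hg_cont.norm.pow 2)
    · refine hg_cpt.mono' (fun x hx => ?_)
      by_contra h
      have : gradient w x = 0 := Function.notMem_support.mp fun hmem => h (subset_closure hmem)
      simp [this] at hx
  have inorm2 : Integrable (fun x => (u x) ^ 2 * ‖gradient η x‖ ^ 2) := by
    apply Continuous.integrable_of_hasCompactSupport
    · exact (hu1.continuous.pow 2).mul (hq_cont.norm.pow 2)
    · refine hq_cpt.mono' (fun x hx => ?_)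
      by_contra h
      have : gradient η x = 0 := Function.notMem_support.mp fun hmem => h (subset_closure hmem)
      simp [this] at hx
  -- the integral identity
  have hBC : ∫ x, ⟪a x (gradient w x), gradient w x⟫
      = ∫ x, (u x) ^ 2 * ⟪a x (gradient η x), gradient η x⟫ := by
    have h0 : (fun x => vecDiv G x)
        = fun x => ⟪a x (gradient w x), gradient w x⟫
            - (u x) ^ 2 * ⟪a x (gradient η x), gradient η x⟫ := funext key
    rw [h0, integral_sub iB iC] at hint
    linarith
  -- chain of inequalities
  have step1 : α * ∫ x, ‖gradient w x‖ ^ 2 ≤ ∫ x, ⟪a x (gradient w x), gradient w x⟫ := by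
    rw [← integral_const_mul]
    exact integral_mono (inorm.const_mul α) iB fun x => ha_coercive x (gradient w x)
  have step2 : ∫ x, (u x) ^ 2 * ⟪a x (gradient η x), gradient η x⟫
      ≤ β * ∫ x, (u x) ^ 2 * ‖gradient η x‖ ^ 2 := by
    rw [← integral_const_mul]
    refine integral_mono iC (inorm2.const_mul β) fun x => ?_
    have := ha_bounded x (gradient η x)
    calc (u x) ^ 2 * ⟪a x (gradient η x), gradient η x⟫
        ≤ (u x) ^ 2 * (β * ‖gradient η x‖ ^ 2) :=
          mul_le_mul_of_nonneg_left this (sq_nonneg _)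
      _ = β * ((u x) ^ 2 * ‖gradient η x‖ ^ 2) := by ring
  have final : α * ∫ x, ‖gradient w x‖ ^ 2 ≤ β * ∫ x, (u x) ^ 2 * ‖gradient η x‖ ^ 2 := by
    calc α * ∫ x, ‖gradient w x‖ ^ 2 ≤ ∫ x, ⟪a x (gradient w x), gradient w x⟫ := step1
      _ = ∫ x, (u x) ^ 2 * ⟪a x (gradient η x), gradient η x⟫ := hBC
      _ ≤ β * ∫ x, (u x) ^ 2 * ‖gradient η x‖ ^ 2 := step2
  rw [div_mul_eq_mul_div, le_div_iff₀ hα, mul_comm _ α]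
  exact final
end

section
/- For every natural number d there exists a constant C > 0 (depending only on d) such that for all real B > 0 and all T with 0 < T ≤ B: ∫_0^T s^{−d} exp(−B/s) ds ≤ C · B⁻¹ · T^{2−d} · exp(−B/T). (Here the exponent 2 − d is taken as a real exponent.) -/
/-!
Write `e^{-B/s} = e^{-B/(2s)} e^{-B/(2s)}`. For `0 < s ≤ T ≤ B` one has `T / s ≤ 1 + τ`
with `τ = B/s - B/T ≥ 0`, and `(1 + τ)^d` is dominated by a multiple of `e^{τ/2}`.
This gives the pointwise bound
`s^{-d} e^{-B/s} ≤ M_d T^{2-d} e^{-B/(2T)} · s^{-2} e^{-B/(2s)}`,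
and the last factor integrates exactly over `(0, T)` to `(B/2)⁻¹ e^{-B/(2T)}`:
its antiderivative `b⁻¹ e^{-b/x}` extends continuously by `0` to `x ≤ 0`,
as `b⁻¹ expNegInvGlue (x / b)`.
-/

open MeasureTheory Real Set
open scoped Nat

lemma expNegInvGlue_div_of_pos {b x : ℝ} (hb : 0 < b) (hx : 0 < x) :
    expNegInvGlue (x / b) = exp (-b / x) := by
  rw [expNegInvGlue, if_neg (div_pos hx hb).not_ge, inv_div, neg_div]

lemma hasDerivAt_expNegInvGlue_div {b x : ℝ} (hb : 0 < b) (hx : 0 < x) :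
    HasDerivAt (fun y => b⁻¹ * expNegInvGlue (y / b)) ((x ^ 2)⁻¹ * exp (-b / x)) x := by
  have hexp := ((hasDerivAt_inv hx.ne').const_mul (-b)).exp.const_mul b⁻¹
  simp only [← div_eq_mul_inv] at hexp
  have hglue :
      (fun y => b⁻¹ * expNegInvGlue (y / b)) =ᶠ[nhds x] fun y => b⁻¹ * exp (-b / y) := by
    filter_upwards [lt_mem_nhds hx] with y hy
    rw [expNegInvGlue_div_of_pos hb hy]
  refine (hexp.congr_of_eventuallyEq hglue).congr_deriv ?_
  field_simp

lemma continuous_expNegInvGlue_div (b : ℝ) :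
    Continuous (fun y => b⁻¹ * expNegInvGlue (y / b)) := by
  fun_prop

lemma integrableOn_inv_sq_mul_exp_neg_div {b : ℝ} (hb : 0 < b) (T : ℝ) :
    IntegrableOn (fun s => (s ^ 2)⁻¹ * exp (-b / s)) (Ioo 0 T) :=
  (intervalIntegral.integrableOn_deriv_of_nonneg (continuous_expNegInvGlue_div b).continuousOn
    (fun _ hx => hasDerivAt_expNegInvGlue_div hb hx.1) (fun _ _ => by positivity)).mono_set
    Ioo_subset_Ioc_self

lemma integral_inv_sq_mul_exp_neg_div {b T : ℝ} (hb : 0 < b) (hT : 0 < T) :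
    ∫ s in Ioo 0 T, (s ^ 2)⁻¹ * exp (-b / s) = b⁻¹ * exp (-b / T) := by
  rw [← integral_Ioc_eq_integral_Ioo, ← intervalIntegral.integral_of_le hT.le,
    intervalIntegral.integral_eq_sub_of_hasDerivAt_of_le hT.le
      (continuous_expNegInvGlue_div b).continuousOn
      (fun x hx => hasDerivAt_expNegInvGlue_div hb hx.1)
      ((intervalIntegrable_iff_integrableOn_Ioo_of_le hT.le).mpr
        (integrableOn_inv_sq_mul_exp_neg_div hb T))]
  simp [expNegInvGlue_div_of_pos hb hT]

lemma one_add_pow_le_mul_exp_half (n : ℕ) {x : ℝ} (hx : 0 ≤ x) :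
    (1 + x) ^ n ≤ 2 ^ n * n ! * exp 1 * exp (x / 2) := by
  have hfac := Real.pow_div_factorial_le_exp (1 + x / 2) (by positivity) n
  rw [div_le_iff₀ (by positivity), exp_add] at hfac
  calc (1 + x) ^ n ≤ (2 * (1 + x / 2)) ^ n := pow_le_pow_left₀ (by positivity) (by linarith) n
    _ = 2 ^ n * (1 + x / 2) ^ n := mul_pow 2 _ n
    _ ≤ 2 ^ n * (exp 1 * exp (x / 2) * n !) := by gcongr
    _ = 2 ^ n * n ! * exp 1 * exp (x / 2) := by ring

lemma div_le_one_add_sub_div {s T B : ℝ} (hs : 0 < s) (hsT : s ≤ T) (hTB : T ≤ B) :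
    T / s ≤ 1 + (B / s - B / T) := by
  have hT : 0 < T := hs.trans_le hsT
  have hsub : B / s - B / T = B / T * ((T - s) / s) := by field_simp
  have hgap : (T - s) / s ≤ B / T * ((T - s) / s) :=
    le_mul_of_one_le_left (div_nonneg (sub_nonneg.mpr hsT) hs.le) ((one_le_div hT).mpr hTB)
  calc T / s = 1 + (T - s) / s := by field_simp; ring
    _ ≤ 1 + (B / s - B / T) := by rw [hsub]; linarith

lemma div_rpow_sub_two_le (d : ℕ) {s T B : ℝ} (hs : 0 < s) (hsT : s ≤ T) (hTB : T ≤ B) :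
    (T / s) ^ ((d : ℝ) - 2) ≤ 2 ^ d * d ! * exp 1 * exp ((B / s - B / T) / 2) := by
  have hτ : 0 ≤ B / s - B / T := sub_nonneg.mpr (by gcongr; linarith)
  calc (T / s) ^ ((d : ℝ) - 2) ≤ (T / s) ^ (d : ℝ) :=
        rpow_le_rpow_of_exponent_le ((one_le_div hs).mpr hsT) (by linarith)
    _ = (T / s) ^ d := rpow_natCast _ d
    _ ≤ (1 + (B / s - B / T)) ^ d :=
        pow_le_pow_left₀ (div_pos (hs.trans_le hsT) hs).le (div_le_one_add_sub_div hs hsT hTB) d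
    _ ≤ _ := one_add_pow_le_mul_exp_half d hτ

lemma rpow_neg_natCast_eq {s T : ℝ} (hs : 0 < s) (hT : 0 < T) (d : ℕ) :
    s ^ (-(d : ℝ)) = (T / s) ^ ((d : ℝ) - 2) * T ^ ((2 : ℝ) - d) * (s ^ 2)⁻¹ := by
  rw [div_rpow hT.le hs.le, ← rpow_natCast s 2, ← rpow_neg hs.le, div_eq_mul_inv,
    ← rpow_neg hs.le]
  calc s ^ (-(d : ℝ)) = T ^ ((d : ℝ) - 2 + (2 - d)) * s ^ (-((d : ℝ) - 2) + -(2 : ℕ)) := by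
        rw [sub_add_sub_cancel, sub_self, rpow_zero, one_mul]; push_cast; ring_nf
    _ = _ := by rw [rpow_add hT, rpow_add hs]; ring

lemma rpow_neg_mul_exp_neg_div_le (d : ℕ) {s T B : ℝ} (hs : 0 < s) (hsT : s ≤ T)
    (hTB : T ≤ B) :
    s ^ (-(d : ℝ)) * exp (-B / s) ≤
      2 ^ d * d ! * exp 1 * T ^ ((2 : ℝ) - d) * exp (-(B / 2) / T) *
        ((s ^ 2)⁻¹ * exp (-(B / 2) / s)) := by
  have hT : 0 < T := hs.trans_le hsT
  have hexp : exp ((B / s - B / T) / 2) * exp (-B / s) =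
      exp (-(B / 2) / T) * exp (-(B / 2) / s) := by
    rw [← exp_add, ← exp_add]; ring_nf
  rw [rpow_neg_natCast_eq hs hT]
  calc (T / s) ^ ((d : ℝ) - 2) * T ^ ((2 : ℝ) - d) * (s ^ 2)⁻¹ * exp (-B / s)
      ≤ 2 ^ d * d ! * exp 1 * exp ((B / s - B / T) / 2) * T ^ ((2 : ℝ) - d) * (s ^ 2)⁻¹ *
          exp (-B / s) := by
        gcongr; exact div_rpow_sub_two_le d hs hsT hTB
    _ = _ := by
        linear_combination (2 ^ d * d ! * exp 1 * T ^ ((2 : ℝ) - d) * (s ^ 2)⁻¹) * hexp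

/-- For every dimension `d` there is a constant `C > 0` such that for all `B > 0` and
`0 < T ≤ B` one has `∫_0^T s^{−d} e^{−B/s} ds ≤ C B⁻¹ T^{2−d} e^{−B/T}`. -/
theorem integral_inv_pow_exp_bound (d : ℕ) :
    ∃ C : ℝ, 0 < C ∧ ∀ B : ℝ, 0 < B → ∀ T : ℝ, 0 < T → T ≤ B →
      ∫ s in Set.Ioo (0 : ℝ) T, s ^ (-(d : ℝ)) * Real.exp (-B / s) ≤
        C * B⁻¹ * T ^ ((2 : ℝ) - d) * Real.exp (-B / T) := by
  refine ⟨2 * (2 ^ d * d ! * exp 1), by positivity, fun B hB T hT hTB => ?_⟩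
  have hB2 : 0 < B / 2 := half_pos hB
  set K := 2 ^ d * d ! * exp 1 * T ^ ((2 : ℝ) - d) * exp (-(B / 2) / T)
  have hexp : exp (-(B / 2) / T) * exp (-(B / 2) / T) = exp (-B / T) := by
    rw [← exp_add]; ring_nf
  calc ∫ s in Ioo 0 T, s ^ (-(d : ℝ)) * exp (-B / s)
      ≤ ∫ s in Ioo 0 T, K * ((s ^ 2)⁻¹ * exp (-(B / 2) / s)) := by
        refine integral_mono_of_nonneg ?_
          ((integrableOn_inv_sq_mul_exp_neg_div hB2 T).const_mul K) ?_ <;>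
          filter_upwards [ae_restrict_mem measurableSet_Ioo] with s hs
        · have := hs.1; positivity
        · exact rpow_neg_mul_exp_neg_div_le d hs.1 hs.2.le hTB
    _ = K * ((B / 2)⁻¹ * exp (-(B / 2) / T)) := by
        rw [integral_const_mul, integral_inv_sq_mul_exp_neg_div hB2 hT]
    _ = _ := by
        simp only [K, ← hexp]; field_simp
end
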